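/- arXiv:2312.05623 — 10 statements merged into one kernel-verified Lean document; each statement's English description precedes it below -/
import Mathlib

section
/- Let Ω ∈ (0, π/2), θ ∈ (0, Ω], and u > 0. For v ∈ ℝ define the interferer position w(v) = (−v·sin θ, u + v·cos θ) and the interferer beam axis e = (sin θ, −cos θ). Then the mutual interference condition — ⟨w(v), (0,1)⟩ ≥ ‖w(v)‖·cos Ω and ⟨−w(v), e⟩ ≥ ‖w(v)‖·cos Ω — holds if and only if v ≥ −u·(cos θ − sin θ·(cos Ω / sin Ω)), i.e., if and only if v ≥ u·sin(θ − Ω)/sin Ω. (This is Case 1 of Theorem 1: when the street crosses the ego street ahead of the ego radar at an angle θ ≤ Ω, the interference region is a half-line with endpoint a = −u(cos θ − sin θ·cot Ω) and b = ∞.) -/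
open Real
open scoped RealInnerProductSpace
noncomputable def vec2 (x y : ℝ) : EuclideanSpace ℝ (Fin 2) := WithLp.toLp 2 ![x, y]

lemma inner2 (a b c d : ℝ) : ⟪vec2 a b, vec2 c d⟫ = a*c + b*d := by
  simp [vec2, PiLp.inner_apply, Fin.sum_univ_two]
  ring

lemma norm2 (a b : ℝ) : ‖vec2 a b‖ = Real.sqrt (a^2 + b^2) := by
  simp [vec2, EuclideanSpace.norm_eq, Fin.sum_univ_two, sq_abs]

set_option maxHeartbeats 1000000 in
/-- Case 1 of Theorem 1: the ego radar is at the origin with beam axis `(0,1)` and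
half-beamwidth `Ω`; another street crosses the ego street at `(0, u)` (`u > 0`) at angle
`θ ≤ Ω`. The interferer at signed distance `v` from the intersection is at
`w(v) = (0,u) + v·(−sin θ, cos θ)` with beam axis `e = (sin θ, −cos θ)`.
Mutual interference holds iff `v ≥ −u(cos θ − sin θ·cot Ω)`, i.e. iff
`v ≥ u·sin(θ − Ω)/sin Ω`. -/
theorem interference_case1 (Ω θ u : ℝ) (hΩ : Ω ∈ Set.Ioo 0 (π / 2))
    (hθ : θ ∈ Set.Ioc 0 Ω) (hu : 0 < u) (v : ℝ) :
    ((⟪vec2 (-(v * sin θ)) (u + v * cos θ), vec2 0 1⟫ ≥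
        ‖vec2 (-(v * sin θ)) (u + v * cos θ)‖ * cos Ω ∧
      ⟪-(vec2 (-(v * sin θ)) (u + v * cos θ)), vec2 (sin θ) (-cos θ)⟫ ≥
        ‖vec2 (-(v * sin θ)) (u + v * cos θ)‖ * cos Ω) ↔
      v ≥ -(u * (cos θ - sin θ * (cos Ω / sin Ω)))) ∧
    ((⟪vec2 (-(v * sin θ)) (u + v * cos θ), vec2 0 1⟫ ≥
        ‖vec2 (-(v * sin θ)) (u + v * cos θ)‖ * cos Ω ∧
      ⟪-(vec2 (-(v * sin θ)) (u + v * cos θ)), vec2 (sin θ) (-cos θ)⟫ ≥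
        ‖vec2 (-(v * sin θ)) (u + v * cos θ)‖ * cos Ω) ↔
      v ≥ u * sin (θ - Ω) / sin Ω) := by
  obtain ⟨hΩ0, hΩ2⟩ := hΩ
  obtain ⟨hθ0, hθΩ⟩ := hθ
  have hθ2 : θ < π / 2 := lt_of_le_of_lt hθΩ hΩ2
  have hsΩ : 0 < sin Ω := sin_pos_of_pos_of_lt_pi hΩ0 (hΩ2.trans (by linarith [pi_pos]))
  have hcΩ : 0 < cos Ω := cos_pos_of_mem_Ioo ⟨by linarith, hΩ2⟩
  have hsθ : 0 < sin θ := sin_pos_of_pos_of_lt_pi hθ0 (hθ2.trans (by linarith [pi_pos]))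
  have hcθ : 0 < cos θ := cos_pos_of_mem_Ioo ⟨by linarith, hθ2⟩
  have hccΩ : cos Ω ≤ cos θ := by
    apply cos_le_cos_of_nonneg_of_le_pi (le_of_lt hθ0) (by linarith [pi_pos]) hθΩ
  have hcθ1 : cos θ ≤ 1 := cos_le_one θ
  have hpyθ : sin θ ^ 2 + cos θ ^ 2 = 1 := sin_sq_add_cos_sq θ
  have hpyΩ : sin Ω ^ 2 + cos Ω ^ 2 = 1 := sin_sq_add_cos_sq Ω
  have hiA : ⟪vec2 (-(v * sin θ)) (u + v * cos θ), vec2 0 1⟫ = u + v * cos θ := by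
    rw [inner2]; ring
  have hiB : ⟪-(vec2 (-(v * sin θ)) (u + v * cos θ)), vec2 (sin θ) (-cos θ)⟫
      = v + u * cos θ := by
    rw [inner_neg_left, inner2]; linear_combination v * hpyθ
  have hr0 : (0:ℝ) ≤ ‖vec2 (-(v * sin θ)) (u + v * cos θ)‖ := norm_nonneg _
  have hrsq : ‖vec2 (-(v * sin θ)) (u + v * cos θ)‖ ^ 2
      = u ^ 2 + v ^ 2 + 2 * u * v * cos θ := by
    rw [norm2, sq_sqrt (by positivity)]
    linear_combination v ^ 2 * hpyθ
  rw [hiA, hiB]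
  generalize hgen : ‖vec2 (-(v * sin θ)) (u + v * cos θ)‖ = r at hr0 hrsq ⊢
  clear hgen hiA hiB
  set a : ℝ := u * sin (θ - Ω) / sin Ω with ha
  have hsA : sin Ω * a = u * (sin θ * cos Ω - cos θ * sin Ω) := by
    rw [ha, sin_sub]; field_simp
  have hrhs : -(u * (cos θ - sin θ * (cos Ω / sin Ω))) = a := by
    rw [ha, sin_sub]; field_simp; ring
  set P : ℝ := sin Ω * v - u * (sin θ * cos Ω - cos θ * sin Ω) with hP
  set Q : ℝ := sin Ω * v + u * (cos θ * sin Ω + cos Ω * sin θ) with hQ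
  have hPa : P = sin Ω * (v - a) := by rw [hP]; linear_combination hsA
  have hg : (v + u * cos θ) ^ 2 - cos Ω ^ 2 * r ^ 2 = P * Q := by
    rw [hP, hQ]
    linear_combination (-(cos Ω ^ 2)) * hrsq + (u ^ 2 * cos Ω ^ 2) * hpyθ
      - (v ^ 2 + 2 * u * v * cos θ + u ^ 2 * cos θ ^ 2) * hpyΩ
  have hagt : -(u * cos θ) < a := by
    nlinarith [hsA, mul_pos (mul_pos hu hsθ) hcΩ, hsΩ]
  have hkey : (u + v * cos θ ≥ r * cos Ω ∧ v + u * cos θ ≥ r * cos Ω) ↔ v ≥ a := by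
    constructor
    · rintro ⟨_, hB⟩
      have hB0 : 0 ≤ v + u * cos θ := le_trans (by positivity) hB
      have hQpos : 0 < Q := by
        rw [hQ]
        linarith [mul_nonneg hsΩ.le hB0, mul_pos (mul_pos hu hcΩ) hsθ]
      have hgge : 0 ≤ P * Q := by
        rw [← hg]
        nlinarith [mul_le_mul hB hB (mul_nonneg hr0 hcΩ.le) hB0]
      have hPnn : 0 ≤ P := by
        by_contra hlt; push_neg at hlt; nlinarith [hgge, hQpos]
      rw [hPa] at hPnn
      nlinarith [hPnn, hsΩ]
    · intro hv
      have hB0 : 0 < v + u * cos θ := by linarith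
      have hPnn : 0 ≤ P := by rw [hPa]; exact mul_nonneg hsΩ.le (by linarith)
      have hQpos : 0 < Q := by
        rw [hQ]
        linarith [mul_nonneg hsΩ.le hB0.le, mul_pos (mul_pos hu hcΩ) hsθ]
      have hB : v + u * cos θ ≥ r * cos Ω := by
        nlinarith [hg, mul_nonneg hPnn hQpos.le, hB0, mul_nonneg hr0 hcΩ.le]
      refine ⟨?_, hB⟩
      rcases le_or_gt v u with hvu | huv
      · nlinarith [hB, mul_nonneg (sub_nonneg.mpr hvu) (sub_nonneg.mpr hcθ1)]
      · have hv0 : 0 < v := lt_trans hu huv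
        have hA0 : 0 < u + v * cos θ := by nlinarith
        have hf : (u + v * cos θ) ^ 2 - cos Ω ^ 2 * r ^ 2
            = sin Ω ^ 2 * (u ^ 2 + 2 * u * v * cos θ) + v ^ 2 * (cos θ ^ 2 - cos Ω ^ 2) := by
          rw [hrsq]; linear_combination (-(u ^ 2 + 2 * u * v * cos θ)) * hpyΩ
        have hcsq : cos Ω ^ 2 ≤ cos θ ^ 2 := by nlinarith
        have hfnn : 0 ≤ (u + v * cos θ) ^ 2 - cos Ω ^ 2 * r ^ 2 := by
          rw [hf]
          have h1 : 0 ≤ sin Ω ^ 2 * (u ^ 2 + 2 * u * v * cos θ) := by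
            apply mul_nonneg (sq_nonneg _)
            nlinarith [mul_pos (mul_pos hu hv0) hcθ]
          exact add_nonneg h1 (mul_nonneg (sq_nonneg v) (by linarith))
        nlinarith [hfnn, hA0, mul_nonneg hr0 hcΩ.le]
  exact ⟨by rw [hrhs]; exact hkey, hkey⟩
end

section
/- Let Ω ∈ (0, π/3), θ ∈ (Ω, 2Ω], and u > 0. For v ∈ ℝ define the interferer position w(v) = (−v·sin θ, u + v·cos θ) and the interferer beam axis e = (sin θ, −cos θ). Then the mutual interference condition — ⟨w(v), (0,1)⟩ ≥ ‖w(v)‖·cos Ω and ⟨−w(v), e⟩ ≥ ‖w(v)‖·cos Ω — holds if and only if u·sin(θ − Ω)/sin Ω ≤ v ≤ u·tan Ω/(sin θ − cos θ·tan Ω). (This is Case 2 of Theorem 1: when the street crosses ahead of the ego radar at an angle Ω < θ ≤ 2Ω, the interference region is the bounded interval [a, b] with a = u·sin(θ−Ω)/sin Ω and b = u·tan Ω/(sin θ − cos θ·tan Ω) = u·sin Ω/sin(θ−Ω).) -/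
open Real
open scoped RealInnerProductSpace

lemma aux_sq (p R c : ℝ) (hR : 0 ≤ R) (hc : 0 < c) :
    (p ≥ R * c ↔ 0 ≤ p ∧ R^2 * c^2 ≤ p^2) := by
  constructor
  · intro h
    have h0 : 0 ≤ R * c := mul_nonneg hR hc.le
    exact ⟨by linarith, by nlinarith⟩
  · rintro ⟨h0, h2⟩
    nlinarith [mul_nonneg hR hc.le]

lemma fac1 (u v sθ cθ sΩ cΩ R : ℝ) (h2 : sΩ^2 + cΩ^2 = 1)
    (hR2 : R^2 = (v*sθ)^2 + (u + v*cθ)^2) :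
    (u + v*cθ)^2 - R^2*cΩ^2 =
      (u*sΩ - v*(sθ*cΩ - cθ*sΩ)) * (u*sΩ + v*(sθ*cΩ + cθ*sΩ)) := by
  rw [hR2]; linear_combination (-(u + v*cθ)^2) * h2

lemma fac2 (u v sθ cθ sΩ cΩ R : ℝ) (h1 : sθ^2 + cθ^2 = 1) (h2 : sΩ^2 + cΩ^2 = 1)
    (hR2 : R^2 = (v*sθ)^2 + (u + v*cθ)^2) :
    (v + u*cθ)^2 - R^2*cΩ^2 =
      (v*sΩ - u*(sθ*cΩ - cθ*sΩ)) * (v*sΩ + u*(sθ*cΩ + cθ*sΩ)) := by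
  rw [hR2]; linear_combination (-(v + u*cθ)^2) * h2 + (cΩ^2*(u^2 - v^2)) * h1

set_option maxHeartbeats 1000000 in
private theorem interference_case2_aux (Ω θ u : ℝ) (hΩ : Ω ∈ Set.Ioo 0 (π / 3))
    (hθ : θ ∈ Set.Ioc Ω (2 * Ω)) (hu : 0 < u) (v : ℝ) :
    ((⟪vec2 (-(v * sin θ)) (u + v * cos θ), vec2 0 1⟫ ≥
        ‖vec2 (-(v * sin θ)) (u + v * cos θ)‖ * cos Ω ∧
      ⟪-(vec2 (-(v * sin θ)) (u + v * cos θ)), vec2 (sin θ) (-cos θ)⟫ ≥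
        ‖vec2 (-(v * sin θ)) (u + v * cos θ)‖ * cos Ω) ↔
      u * sin (θ - Ω) / sin Ω ≤ v ∧ v ≤ u * sin Ω / sin (θ - Ω)) := by
  obtain ⟨hΩ0, hΩ3⟩ := hΩ
  obtain ⟨hθΩ, hθ2⟩ := hθ
  have hπ : (0:ℝ) < π := pi_pos
  have hsΩ : 0 < sin Ω := sin_pos_of_pos_of_lt_pi hΩ0 (by linarith)
  have hcΩ : 0 < cos Ω := cos_pos_of_mem_Ioo ⟨by linarith, by linarith⟩
  have hsθ : 0 < sin θ := sin_pos_of_pos_of_lt_pi (by linarith) (by linarith)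
  have hsub : 0 < sin (θ - Ω) := sin_pos_of_pos_of_lt_pi (by linarith) (by linarith)
  have hadd : 0 < sin (θ + Ω) := sin_pos_of_pos_of_lt_pi (by linarith) (by linarith)
  have haddE : sin (θ + Ω) = sin θ * cos Ω + cos θ * sin Ω := sin_add θ Ω
  have hsubE : sin (θ - Ω) = sin θ * cos Ω - cos θ * sin Ω := sin_sub θ Ω
  have hpyθ : sin θ ^ 2 + cos θ ^ 2 = 1 := sin_sq_add_cos_sq θ
  have hpyΩ : sin Ω ^ 2 + cos Ω ^ 2 = 1 := sin_sq_add_cos_sq Ω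
  set sθ := sin θ; set cθ := cos θ; set sΩ := sin Ω; set cΩ := cos Ω
  have hd : 0 < sθ * cΩ - cθ * sΩ := hsubE ▸ hsub
  have he : 0 < sθ * cΩ + cθ * sΩ := haddE ▸ hadd
  have hnorm : ‖vec2 (-(v * sθ)) (u + v * cθ)‖ = Real.sqrt ((v*sθ)^2 + (u + v*cθ)^2) := by
    simp [vec2, EuclideanSpace.norm_eq, Fin.sum_univ_two, sq_abs]
  have hi1 : ⟪vec2 (-(v * sθ)) (u + v * cθ), vec2 0 1⟫ = u + v * cθ := by
    simp [vec2, PiLp.inner_apply, Fin.sum_univ_two]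
  have hi2 : ⟪-(vec2 (-(v * sθ)) (u + v * cθ)), vec2 sθ (-cθ)⟫ = v + u * cθ := by
    simp [vec2, inner_neg_left, PiLp.inner_apply, Fin.sum_univ_two]
    linear_combination v * hpyθ
  set R := Real.sqrt ((v*sθ)^2 + (u + v*cθ)^2) with hRdef
  have hR0 : 0 ≤ R := Real.sqrt_nonneg _
  have hR2 : R^2 = (v*sθ)^2 + (u + v*cθ)^2 := Real.sq_sqrt (by positivity)
  have hF1 := fac1 u v sθ cθ sΩ cΩ R hpyΩ hR2
  have hF2 := fac2 u v sθ cθ sΩ cΩ R hpyθ hpyΩ hR2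
  rw [hi1, hi2, hnorm]
  rw [aux_sq _ _ _ hR0 hcΩ, aux_sq _ _ _ hR0 hcΩ]
  rw [div_le_iff₀ hsΩ, le_div_iff₀ hsub, hsubE]
  clear_value R sθ cθ sΩ cΩ
  clear hnorm hi1 hi2 hRdef hsub hsubE hadd haddE hθΩ hθ2 hΩ0 hΩ3 hπ
  constructor
  · rintro ⟨⟨hP0, hP2⟩, ⟨hQ0, hQ2⟩⟩
    have hf1 : 0 ≤ (u*sΩ - v*(sθ*cΩ - cθ*sΩ)) * (u*sΩ + v*(sθ*cΩ + cθ*sΩ)) := by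
      linarith [hF1]
    have hf2 : 0 ≤ (v*sΩ - u*(sθ*cΩ - cθ*sΩ)) * (v*sΩ + u*(sθ*cΩ + cθ*sΩ)) := by
      linarith [hF2]
    constructor
    · by_contra h
      push_neg at h
      have h2 : v*sΩ + u*(sθ*cΩ + cθ*sΩ) ≤ 0 := by
        by_contra h2
        push_neg at h2
        nlinarith [mul_pos (show 0 < u*(sθ*cΩ - cθ*sΩ) - v*sΩ by linarith) h2]
      nlinarith [mul_nonneg hQ0 hsΩ.le, mul_pos hu (mul_pos hsθ hcΩ)]
    · by_contra h
      push_neg at h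
      have h2 : u*sΩ + v*(sθ*cΩ + cθ*sΩ) ≤ 0 := by
        by_contra h2
        push_neg at h2
        nlinarith [mul_pos (show 0 < v*(sθ*cΩ - cθ*sΩ) - u*sΩ by linarith) h2]
      nlinarith [mul_nonneg hP0 hsΩ.le, mul_pos hu (mul_pos hsθ hcΩ)]
  · rintro ⟨ha, hb⟩
    have hv0 : 0 < v := by nlinarith [mul_pos hu hd]
    have hP0 : 0 ≤ u + v * cθ := by
      nlinarith [mul_pos hv0 (mul_pos hsθ hcΩ), hsΩ]
    have hQ0 : 0 ≤ v + u * cθ := by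
      nlinarith [mul_pos hu (mul_pos hsθ hcΩ), hsΩ]
    have t1 : 0 ≤ u*sΩ - v*(sθ*cΩ - cθ*sΩ) := by linarith
    have t2 : 0 ≤ u*sΩ + v*(sθ*cΩ + cθ*sΩ) := by
      nlinarith [mul_nonneg hv0.le he.le, mul_pos hu hsΩ]
    have t3 : 0 ≤ v*sΩ - u*(sθ*cΩ - cθ*sΩ) := by linarith
    have t4 : 0 ≤ v*sΩ + u*(sθ*cΩ + cθ*sΩ) := by
      nlinarith [mul_nonneg hu.le he.le, mul_pos hv0 hsΩ]
    exact ⟨⟨hP0, by nlinarith [mul_nonneg t1 t2]⟩, ⟨hQ0, by nlinarith [mul_nonneg t3 t4]⟩⟩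



/-- Case 2 of Theorem 1: the ego radar is at the origin with beam axis `(0,1)` and
half-beamwidth `Ω`; another street crosses the ego street at `(0, u)` (`u > 0`) at angle
`θ` with `Ω < θ ≤ 2Ω`. The interferer at signed distance `v` from the intersection is at
`w(v) = (0,u) + v·(−sin θ, cos θ)` with beam axis `e = (sin θ, −cos θ)`.
Mutual interference holds iff `u·sin(θ−Ω)/sin Ω ≤ v ≤ u·tan Ω/(sin θ − cos θ·tan Ω)`,
the upper bound being equal to `u·sin Ω/sin(θ−Ω)`. -/
theorem interference_case2 (Ω θ u : ℝ) (hΩ : Ω ∈ Set.Ioo 0 (π / 3))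
    (hθ : θ ∈ Set.Ioc Ω (2 * Ω)) (hu : 0 < u) (v : ℝ) :
    ((⟪vec2 (-(v * sin θ)) (u + v * cos θ), vec2 0 1⟫ ≥
        ‖vec2 (-(v * sin θ)) (u + v * cos θ)‖ * cos Ω ∧
      ⟪-(vec2 (-(v * sin θ)) (u + v * cos θ)), vec2 (sin θ) (-cos θ)⟫ ≥
        ‖vec2 (-(v * sin θ)) (u + v * cos θ)‖ * cos Ω) ↔
      u * sin (θ - Ω) / sin Ω ≤ v ∧ v ≤ u * tan Ω / (sin θ - cos θ * tan Ω)) ∧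
    ((⟪vec2 (-(v * sin θ)) (u + v * cos θ), vec2 0 1⟫ ≥
        ‖vec2 (-(v * sin θ)) (u + v * cos θ)‖ * cos Ω ∧
      ⟪-(vec2 (-(v * sin θ)) (u + v * cos θ)), vec2 (sin θ) (-cos θ)⟫ ≥
        ‖vec2 (-(v * sin θ)) (u + v * cos θ)‖ * cos Ω) ↔
      u * sin (θ - Ω) / sin Ω ≤ v ∧ v ≤ u * sin Ω / sin (θ - Ω)) := by
  have hmain := interference_case2_aux Ω θ u hΩ hθ hu v
  have hπ : (0:ℝ) < π := pi_pos
  obtain ⟨hΩ0, hΩ3⟩ := hΩ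
  obtain ⟨hθΩ, hθ2⟩ := hθ
  have hcΩ : 0 < cos Ω := cos_pos_of_mem_Ioo ⟨by linarith, by linarith⟩
  have hsub : 0 < sin (θ - Ω) := sin_pos_of_pos_of_lt_pi (by linarith) (by linarith)
  have hbd : u * tan Ω / (sin θ - cos θ * tan Ω) = u * sin Ω / sin (θ - Ω) := by
    rw [tan_eq_sin_div_cos, sin_sub]
    rw [show sin θ - cos θ * (sin Ω / cos Ω) = (sin θ * cos Ω - cos θ * sin Ω) / cos Ω by
      field_simp]
    have hd' : sin θ * cos Ω - cos θ * sin Ω ≠ 0 := by rw [← sin_sub]; exact hsub.ne'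
    field_simp
  exact ⟨by rw [hbd]; exact hmain, hmain⟩
end

section
/- Let Ω ∈ (0, π/3), θ ∈ [π − 2Ω, π − Ω), and u > 0. For v ∈ ℝ define the interferer position w(v) = (v·sin θ, u − v·cos θ) and the interferer beam axis e = (−sin θ, cos θ). Then the mutual interference condition — ⟨w(v), (0,1)⟩ ≥ ‖w(v)‖·cos Ω and ⟨−w(v), e⟩ ≥ ‖w(v)‖·cos Ω — holds if and only if u·sin(θ + Ω)/sin Ω ≤ v ≤ u·tan Ω/(sin θ + cos θ·tan Ω). (This is Case 3 of Theorem 1: when the street crosses ahead of the ego radar at an angle θ with π − 2Ω ≤ θ < π − Ω, the interference region is the bounded interval [a, b] with a = u·sin(θ+Ω)/sin Ω and b = u·tan Ω/(sin θ + cos θ·tan Ω) = u·sin Ω/sin(θ+Ω).) -/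
open Real
open scoped RealInnerProductSpace

private lemma inner_vec2 (a b c d : ℝ) : ⟪vec2 a b, vec2 c d⟫ = a * c + b * d := by
  simp [vec2, PiLp.inner_apply, Fin.sum_univ_two, RCLike.inner_apply]; ring

private lemma norm_vec2 (a b : ℝ) : ‖vec2 a b‖ = Real.sqrt (a ^ 2 + b ^ 2) := by
  simp [vec2, EuclideanSpace.norm_eq, Fin.sum_univ_two, sq_abs]


private lemma le_of_sq {x y : ℝ} (hx : 0 ≤ x) (hy : 0 ≤ y) (h : x ^ 2 ≤ y ^ 2) : x ≤ y := by
  nlinarith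

private lemma key (u v st ct sO cO : ℝ) (hu : 0 < u) (hst : 0 < st)
    (hsO : 0 < sO) (hcO : 0 < cO) (ht : st ^ 2 + ct ^ 2 = 1) (hO : sO ^ 2 + cO ^ 2 = 1)
    (hP : 0 < st * cO + ct * sO) (hM : 0 < st * cO - ct * sO) :
    (u - v * ct ≥ Real.sqrt ((v * st) ^ 2 + (u - v * ct) ^ 2) * cO ∧
      v - u * ct ≥ Real.sqrt ((v * st) ^ 2 + (u - v * ct) ^ 2) * cO) ↔
    (u * (st * cO + ct * sO) / sO ≤ v ∧ v ≤ u * sO / (st * cO + ct * sO)) := by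
  have hS0 : 0 ≤ (v * st) ^ 2 + (u - v * ct) ^ 2 := by positivity
  set N := Real.sqrt ((v * st) ^ 2 + (u - v * ct) ^ 2) with hNdef
  have hN0 : 0 ≤ N := Real.sqrt_nonneg _
  have hN2 : N ^ 2 = (v * st) ^ 2 + (u - v * ct) ^ 2 := Real.sq_sqrt hS0
  have idA : (u - v * ct) ^ 2 - ((v * st) ^ 2 + (u - v * ct) ^ 2) * cO ^ 2 =
      (u * sO - v * (st * cO + ct * sO)) * (u * sO + v * (st * cO - ct * sO)) := by
    linear_combination (-(u - v * ct) ^ 2) * hO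
  have idB : (v - u * ct) ^ 2 - ((v * st) ^ 2 + (u - v * ct) ^ 2) * cO ^ 2 =
      (v * sO - u * (st * cO + ct * sO)) * (v * sO + u * (st * cO - ct * sO)) := by
    linear_combination cO ^ 2 * (u ^ 2 - v ^ 2) * ht - (v - u * ct) ^ 2 * hO
  have hustcO : 0 < u * (st * cO) := mul_pos hu (mul_pos hst hcO)
  constructor
  · rintro ⟨h1, h2⟩
    have hNc : 0 ≤ N * cO := by positivity
    have e1 : 0 ≤ u - v * ct := le_trans hNc h1
    have e2 : 0 ≤ v - u * ct := le_trans hNc h2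
    have hsq : ((v * st) ^ 2 + (u - v * ct) ^ 2) * cO ^ 2 = (N * cO) ^ 2 := by
      rw [mul_pow (N) (cO) 2, hN2]
    have q1 : ((v * st) ^ 2 + (u - v * ct) ^ 2) * cO ^ 2 ≤ (u - v * ct) ^ 2 := by
      rw [hsq]; exact pow_le_pow_left₀ hNc h1 2
    have q2 : ((v * st) ^ 2 + (u - v * ct) ^ 2) * cO ^ 2 ≤ (v - u * ct) ^ 2 := by
      rw [hsq]; exact pow_le_pow_left₀ hNc h2 2
    have hf2 : 0 ≤ (v * sO - u * (st * cO + ct * sO)) * (v * sO + u * (st * cO - ct * sO)) := by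
      linarith [idB]
    have hfac2 : 0 < v * sO + u * (st * cO - ct * sO) := by
      have h' : 0 ≤ (v - u * ct) * sO := mul_nonneg e2 hsO.le
      nlinarith [hustcO, h']
    have hvP : u * (st * cO + ct * sO) ≤ v * sO := by
      have := (mul_nonneg_iff_of_pos_right hfac2).mp hf2
      linarith
    have hv0 : 0 < v :=
      (mul_pos_iff_of_pos_right hsO).mp (lt_of_lt_of_le (mul_pos hu hP) hvP)
    have hf1 : 0 ≤ (u * sO - v * (st * cO + ct * sO)) * (u * sO + v * (st * cO - ct * sO)) := by
      linarith [idA]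
    have hfac1 : 0 < u * sO + v * (st * cO - ct * sO) := by positivity
    have hvP1 : v * (st * cO + ct * sO) ≤ u * sO := by
      have := (mul_nonneg_iff_of_pos_right hfac1).mp hf1
      linarith
    exact ⟨(div_le_iff₀ hsO).mpr (by linarith), (le_div_iff₀ hP).mpr hvP1⟩
  · rintro ⟨ha, hb⟩
    have hva : u * (st * cO + ct * sO) ≤ v * sO := (div_le_iff₀ hsO).mp ha
    have hvb : v * (st * cO + ct * sO) ≤ u * sO := (le_div_iff₀ hP).mp hb
    have hv0 : 0 < v :=
      (mul_pos_iff_of_pos_right hsO).mp (lt_of_lt_of_le (mul_pos hu hP) hva)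
    have e2 : 0 ≤ v - u * ct := by
      have h' : 0 ≤ (v - u * ct) * sO := by nlinarith [hustcO, hva]
      exact (mul_nonneg_iff_of_pos_right hsO).mp h'
    have e1 : 0 ≤ u - v * ct := by
      rcases le_or_gt ct 0 with h | h
      · have h' : v * ct ≤ 0 := mul_nonpos_of_nonneg_of_nonpos hv0.le h
        linarith
      · have h'' := mul_le_mul_of_nonneg_left hvb h.le
        have h' : 0 ≤ (u - v * ct) * (st * cO + ct * sO) := by nlinarith [hustcO, h'']
        exact (mul_nonneg_iff_of_pos_right hP).mp h'
    have q2 : ((v * st) ^ 2 + (u - v * ct) ^ 2) * cO ^ 2 ≤ (v - u * ct) ^ 2 := by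
      have hf : 0 ≤ (v * sO - u * (st * cO + ct * sO)) * (v * sO + u * (st * cO - ct * sO)) :=
        mul_nonneg (by linarith) (by positivity)
      linarith [idB]
    have q1 : ((v * st) ^ 2 + (u - v * ct) ^ 2) * cO ^ 2 ≤ (u - v * ct) ^ 2 := by
      have hf : 0 ≤ (u * sO - v * (st * cO + ct * sO)) * (u * sO + v * (st * cO - ct * sO)) :=
        mul_nonneg (by linarith) (by positivity)
      linarith [idA]
    have hNc : 0 ≤ N * cO := by positivity
    constructor
    · exact le_of_sq hNc e1 (by rw [mul_pow, hN2]; exact q1)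
    · exact le_of_sq hNc e2 (by rw [mul_pow, hN2]; exact q2)


/-- Case 3 of Theorem 1: the ego radar is at the origin with beam axis `(0,1)` and
half-beamwidth `Ω`; another street crosses the ego street at `(0, u)` (`u > 0`) at an obtuse
angle `θ` with `π − 2Ω ≤ θ < π − Ω`. The interferer at signed distance `v` from the
intersection is at `w(v) = (0,u) + v·(sin θ, −cos θ)` with beam axis `e = (−sin θ, cos θ)`.
Mutual interference holds iff `u·sin(θ+Ω)/sin Ω ≤ v ≤ u·tan Ω/(sin θ + cos θ·tan Ω)`,
the upper bound being equal to `u·sin Ω/sin(θ+Ω)`. -/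
theorem interference_case3 (Ω θ u : ℝ) (hΩ : Ω ∈ Set.Ioo 0 (π / 3))
    (hθ : θ ∈ Set.Ico (π - 2 * Ω) (π - Ω)) (hu : 0 < u) (v : ℝ) :
    ((⟪vec2 (v * sin θ) (u - v * cos θ), vec2 0 1⟫ ≥
        ‖vec2 (v * sin θ) (u - v * cos θ)‖ * cos Ω ∧
      ⟪-(vec2 (v * sin θ) (u - v * cos θ)), vec2 (-sin θ) (cos θ)⟫ ≥
        ‖vec2 (v * sin θ) (u - v * cos θ)‖ * cos Ω) ↔
      u * sin (θ + Ω) / sin Ω ≤ v ∧ v ≤ u * tan Ω / (sin θ + cos θ * tan Ω)) ∧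
    ((⟪vec2 (v * sin θ) (u - v * cos θ), vec2 0 1⟫ ≥
        ‖vec2 (v * sin θ) (u - v * cos θ)‖ * cos Ω ∧
      ⟪-(vec2 (v * sin θ) (u - v * cos θ)), vec2 (-sin θ) (cos θ)⟫ ≥
        ‖vec2 (v * sin θ) (u - v * cos θ)‖ * cos Ω) ↔
      u * sin (θ + Ω) / sin Ω ≤ v ∧ v ≤ u * sin Ω / sin (θ + Ω)) := by
  obtain ⟨hΩ0, hΩ3⟩ := hΩ
  obtain ⟨hθ1, hθ2⟩ := hθ
  have hpi : (0:ℝ) < π := Real.pi_pos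
  have hsθ : 0 < sin θ := sin_pos_of_pos_of_lt_pi (by linarith) (by linarith)
  have hsO : 0 < sin Ω := sin_pos_of_pos_of_lt_pi hΩ0 (by linarith)
  have hcO : 0 < cos Ω := cos_pos_of_mem_Ioo ⟨by linarith, by linarith⟩
  have hPθ : 0 < sin (θ + Ω) := sin_pos_of_pos_of_lt_pi (by linarith) (by linarith)
  have hMθ : 0 < sin (θ - Ω) := sin_pos_of_pos_of_lt_pi (by linarith) (by linarith)
  have hP : 0 < sin θ * cos Ω + cos θ * sin Ω := by rw [← sin_add]; exact hPθ
  have hM : 0 < sin θ * cos Ω - cos θ * sin Ω := by rw [← sin_sub]; exact hMθ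
  have hkey := key u v (sin θ) (cos θ) (sin Ω) (cos Ω) hu hsθ hsO hcO
    (sin_sq_add_cos_sq θ) (sin_sq_add_cos_sq Ω) hP hM
  have hi1 : ⟪vec2 (v * sin θ) (u - v * cos θ), vec2 0 1⟫ = u - v * cos θ := by
    rw [inner_vec2]; ring
  have hi2 : ⟪-(vec2 (v * sin θ) (u - v * cos θ)), vec2 (-sin θ) (cos θ)⟫ = v - u * cos θ := by
    rw [inner_neg_left, inner_vec2]
    linear_combination v * (sin_sq_add_cos_sq θ)
  have hn : ‖vec2 (v * sin θ) (u - v * cos θ)‖ =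
      Real.sqrt ((v * sin θ) ^ 2 + (u - v * cos θ) ^ 2) := norm_vec2 _ _
  have hb_eq : u * tan Ω / (sin θ + cos θ * tan Ω) =
      u * sin Ω / (sin θ * cos Ω + cos θ * sin Ω) := by
    have hden : sin θ + cos θ * tan Ω = (sin θ * cos Ω + cos θ * sin Ω) / cos Ω := by
      rw [tan_eq_sin_div_cos]; field_simp
    rw [hden, tan_eq_sin_div_cos]
    field_simp
  rw [hi1, hi2, hn, hb_eq, sin_add]
  exact ⟨hkey, hkey⟩
end

section
/- Let Ω ∈ (0, π/2), θ ∈ [π − Ω, π), and u > 0. For v ∈ ℝ define the interferer position w(v) = (v·sin θ, u − v·cos θ) and the interferer beam axis e = (−sin θ, cos θ). Then the mutual interference condition — ⟨w(v), (0,1)⟩ ≥ ‖w(v)‖·cos Ω and ⟨−w(v), e⟩ ≥ ‖w(v)‖·cos Ω — holds if and only if v ≥ u·sin(θ + Ω)/sin Ω. (This is Case 4 of Theorem 1: when the street crosses ahead of the ego radar at an angle θ ≥ π − Ω, the street lies eventually inside the ego beam and the interference region is a half-line, with finite left endpoint a = u·sin(θ+Ω)/sin Ω ≤ 0 and b = ∞.)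 -/
open Real
open scoped RealInnerProductSpace

set_option maxHeartbeats 1600000 in
/-- The purely algebraic core of Case 4: with `s = sin θ`, `c = cos θ`, `S = sin Ω`,
`C = cos Ω` and `r = ‖w(v)‖`, mutual interference is equivalent to `u·(sC + cS) ≤ v·S`. -/
lemma interference_case4_aux (S C s c u v r : ℝ) (hS : 0 < S) (hC : 0 < C) (hs : 0 < s)
    (hc : c ≤ -C) (hc1 : -1 ≤ c) (h1 : s ^ 2 + c ^ 2 = 1) (h2 : S ^ 2 + C ^ 2 = 1)
    (hu : 0 < u) (hr0 : 0 ≤ r) (hr2 : r ^ 2 = u ^ 2 + v ^ 2 - 2 * u * v * c) :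
    (u - v * c ≥ r * C ∧ v - u * c ≥ r * C) ↔ u * (s * C + c * S) ≤ v * S := by
  have hfac : (v * S - u * (s * C + c * S)) * (v * S - u * (c * S - C * s)) =
      (v - u * c) ^ 2 - (r * C) ^ 2 := by
    linear_combination ((v - u * c) ^ 2) * h2 - (u ^ 2 * C ^ 2) * h1 + (C ^ 2) * hr2
  constructor
  · rintro ⟨hA, hB⟩
    have hB0 : 0 ≤ v - u * c := le_trans (mul_nonneg hr0 hC.le) hB
    have hsq : (r * C) ^ 2 ≤ (v - u * c) ^ 2 := by
      nlinarith [mul_nonneg hr0 hC.le]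
    have hPQ : 0 ≤ (v * S - u * (s * C + c * S)) * (v * S - u * (c * S - C * s)) := by
      rw [hfac]; linarith
    have hQ : 0 < v * S - u * (c * S - C * s) := by
      nlinarith [mul_nonneg hS.le hB0, mul_pos (mul_pos hu hC) hs]
    nlinarith [hPQ, hQ]
  · intro hP
    have hB0 : 0 ≤ v - u * c := by
      nlinarith [mul_pos (mul_pos hu hs) hC]
    have hQ : 0 < v * S - u * (c * S - C * s) := by
      nlinarith [mul_pos (mul_pos hu hC) hs]
    have hPQ : 0 ≤ (v * S - u * (s * C + c * S)) * (v * S - u * (c * S - C * s)) :=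
      mul_nonneg (by linarith) hQ.le
    have hsq : (r * C) ^ 2 ≤ (v - u * c) ^ 2 := by
      rw [hfac] at hPQ; linarith
    have hB : r * C ≤ v - u * c := by
      nlinarith [mul_nonneg hr0 hC.le, hB0]
    refine ⟨?_, hB⟩
    rcases le_total v u with hvu | hvu
    · have h3 : 0 ≤ (u - v) * (1 + c) := mul_nonneg (by linarith) (by linarith)
      nlinarith
    · have hv0 : 0 < v := lt_of_lt_of_le hu hvu
      have hA0 : 0 < u - v * c := by
        have := mul_nonneg hv0.le (by linarith : (0:ℝ) ≤ -c - C)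
        have := mul_pos hv0 hC
        nlinarith
      have hcc : C ^ 2 ≤ c ^ 2 := by
        nlinarith [mul_nonneg (by linarith : (0:ℝ) ≤ -c - C) (by linarith : (0:ℝ) ≤ -c + C)]
      have hid : (u - v * c) ^ 2 - (r * C) ^ 2 =
          u ^ 2 * S ^ 2 - 2 * u * v * c * S ^ 2 + v ^ 2 * (c ^ 2 - C ^ 2) := by
        linear_combination (-(C ^ 2)) * hr2 - (u ^ 2 - 2 * u * v * c) * h2
      have ht1 : 0 ≤ u * v * (-c) * S ^ 2 :=
        mul_nonneg (mul_nonneg (mul_nonneg hu.le hv0.le) (by linarith)) (sq_nonneg S)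
      have ht2 : 0 ≤ v ^ 2 * (c ^ 2 - C ^ 2) := mul_nonneg (sq_nonneg v) (by linarith)
      have hsqA : (r * C) ^ 2 ≤ (u - v * c) ^ 2 := by
        nlinarith [sq_nonneg (u * S)]
      nlinarith [mul_nonneg hr0 hC.le, hA0]

/-- Case 4 of Theorem 1: the ego radar is at the origin with beam axis `(0,1)` and
half-beamwidth `Ω`; another street crosses the ego street at `(0, u)` (`u > 0`) at an obtuse
angle `θ` with `π − Ω ≤ θ < π`. The interferer at signed distance `v` from the intersection
is at `w(v) = (0,u) + v·(sin θ, −cos θ)` with beam axis `e = (−sin θ, cos θ)`.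
Mutual interference holds iff `v ≥ u·sin(θ + Ω)/sin Ω`. -/
theorem interference_case4 (Ω θ u : ℝ) (hΩ : Ω ∈ Set.Ioo 0 (π / 2))
    (hθ : θ ∈ Set.Ico (π - Ω) π) (hu : 0 < u) (v : ℝ) :
    (⟪vec2 (v * sin θ) (u - v * cos θ), vec2 0 1⟫ ≥
        ‖vec2 (v * sin θ) (u - v * cos θ)‖ * cos Ω ∧
      ⟪-(vec2 (v * sin θ) (u - v * cos θ)), vec2 (-sin θ) (cos θ)⟫ ≥
        ‖vec2 (v * sin θ) (u - v * cos θ)‖ * cos Ω) ↔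
      v ≥ u * sin (θ + Ω) / sin Ω := by
  obtain ⟨hΩ0, hΩ2⟩ := hΩ
  obtain ⟨hθ1, hθ2⟩ := hθ
  have hπ := Real.pi_pos
  have hS : 0 < sin Ω := Real.sin_pos_of_pos_of_lt_pi hΩ0 (by linarith)
  have hC : 0 < cos Ω := Real.cos_pos_of_mem_Ioo ⟨by linarith, hΩ2⟩
  have hs : 0 < sin θ := Real.sin_pos_of_pos_of_lt_pi (by linarith) hθ2
  have hc : cos θ ≤ -cos Ω := by
    have h := Real.cos_le_cos_of_nonneg_of_le_pi
      (by linarith : (0:ℝ) ≤ π - Ω) (le_of_lt hθ2) hθ1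
    rwa [Real.cos_pi_sub] at h
  have hc1 : -1 ≤ cos θ := Real.neg_one_le_cos θ
  have h1 : sin θ ^ 2 + cos θ ^ 2 = 1 := Real.sin_sq_add_cos_sq θ
  have h2 : sin Ω ^ 2 + cos Ω ^ 2 = 1 := Real.sin_sq_add_cos_sq Ω
  have hr0 : (0:ℝ) ≤ ‖vec2 (v * sin θ) (u - v * cos θ)‖ := norm_nonneg _
  have hr2 : ‖vec2 (v * sin θ) (u - v * cos θ)‖ ^ 2
      = u ^ 2 + v ^ 2 - 2 * u * v * cos θ := by
    have hww := real_inner_self_eq_norm_sq (vec2 (v * sin θ) (u - v * cos θ))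
    have hww' : ⟪vec2 (v * sin θ) (u - v * cos θ), vec2 (v * sin θ) (u - v * cos θ)⟫ =
        (v * sin θ) * (v * sin θ) + (u - v * cos θ) * (u - v * cos θ) := by
      simp [vec2, PiLp.inner_apply, Fin.sum_univ_two, RCLike.inner_apply, EuclideanSpace.norm_sq_eq]
      ring
    rw [hww'] at hww
    nlinarith [h1]
  have hi1 : ⟪vec2 (v * sin θ) (u - v * cos θ), vec2 0 1⟫ = u - v * cos θ := by
    simp [vec2, PiLp.inner_apply, Fin.sum_univ_two, RCLike.inner_apply]
  have hi2 : ⟪-(vec2 (v * sin θ) (u - v * cos θ)), vec2 (-sin θ) (cos θ)⟫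
      = v - u * cos θ := by
    have h3 : ⟪-(vec2 (v * sin θ) (u - v * cos θ)), vec2 (-sin θ) (cos θ)⟫ =
        (-(v * sin θ)) * (-sin θ) + (-(u - v * cos θ)) * cos θ := by
      simp [vec2, PiLp.inner_apply, Fin.sum_univ_two, RCLike.inner_apply]
      ring
    rw [h3]; linear_combination v * h1
  have hRHS : (v ≥ u * sin (θ + Ω) / sin Ω) ↔
      u * (sin θ * cos Ω + cos θ * sin Ω) ≤ v * sin Ω := by
    rw [ge_iff_le, div_le_iff₀ hS, Real.sin_add]
  rw [hi1, hi2, hRHS]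
  exact interference_case4_aux (sin Ω) (cos Ω) (sin θ) (cos θ) u v _
    hS hC hs hc hc1 h1 h2 hu hr0 hr2
end

section
/- Let Ω ∈ (0, π/2), u > 0, and θ ∈ (0, π). Define w(v) = (−v·sin θ, u + v·cos θ) and e = (sin θ, −cos θ). Then for every v ∈ ℝ, the origin lies in the beam cone of half-beamwidth Ω with apex w(v) and axis e — that is, ⟨−w(v), e⟩ ≥ ‖w(v)‖·cos Ω — if and only if v ≥ u·sin(θ − Ω)/sin Ω. -/
open Real
open scoped RealInnerProductSpace

/-- A street crosses the y-axis at `(0, u)` (`u > 0`) at angle `θ ∈ (0, π)`; a radar on that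
street at signed parameter `v` is at `w(v) = (0,u) + v·(−sin θ, cos θ)` with beam axis
`e = (sin θ, −cos θ)`. The origin lies in that radar's beam cone of half-beamwidth `Ω`,
i.e. `⟨−w(v), e⟩ ≥ ‖w(v)‖·cos Ω`, iff `v ≥ u·sin(θ − Ω)/sin Ω`. -/
theorem origin_in_interferer_cone_iff (Ω θ u : ℝ) (hΩ : Ω ∈ Set.Ioo 0 (π / 2))
    (hu : 0 < u) (hθ : θ ∈ Set.Ioo 0 π) (v : ℝ) :
    ⟪-(vec2 (-(v * sin θ)) (u + v * cos θ)), vec2 (sin θ) (-cos θ)⟫ ≥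
        ‖vec2 (-(v * sin θ)) (u + v * cos θ)‖ * cos Ω ↔
      v ≥ u * sin (θ - Ω) / sin Ω := by
  obtain ⟨hΩ0, hΩ2⟩ := hΩ
  obtain ⟨hθ0, hθπ⟩ := hθ
  have hpi := Real.pi_pos
  have hsΩ : 0 < sin Ω := sin_pos_of_pos_of_lt_pi hΩ0 (by linarith)
  have hcΩ : 0 < cos Ω := cos_pos_of_mem_Ioo ⟨by linarith, hΩ2⟩
  have hsθ : 0 < sin θ := sin_pos_of_pos_of_lt_pi hθ0 hθπ
  have hpyθ := sin_sq_add_cos_sq θ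
  have hpyΩ := sin_sq_add_cos_sq Ω
  set N : ℝ := ‖vec2 (-(v * sin θ)) (u + v * cos θ)‖ with hNdef
  have hN0 : 0 ≤ N := norm_nonneg _
  have hN2 : N ^ 2 = (v + u * cos θ) ^ 2 + (u * sin θ) ^ 2 := by
    rw [hNdef, EuclideanSpace.norm_eq]
    rw [Real.sq_sqrt (by positivity)]
    simp [vec2, Fin.sum_univ_two]
    linear_combination (v ^ 2 - u ^ 2) * hpyθ
  have hinner : ⟪-(vec2 (-(v * sin θ)) (u + v * cos θ)), vec2 (sin θ) (-cos θ)⟫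
      = v + u * cos θ := by
    simp [vec2, PiLp.inner_apply, Fin.sum_univ_two]
    linear_combination v * hpyθ
  clear_value N
  rw [hinner, ge_iff_le, ge_iff_le, div_le_iff₀ hsΩ, sin_sub]
  constructor
  · intro h
    have hA0 : 0 ≤ v + u * cos θ := le_trans (by positivity) h
    have hsq : (N * cos Ω) ^ 2 ≤ (v + u * cos θ) ^ 2 := by
      nlinarith [mul_nonneg hN0 hcΩ.le]
    -- A² sin²Ω ≥ B² cos²Ω, with A ≥ 0, so A sinΩ ≥ B cosΩ
    nlinarith [mul_nonneg hA0 hsΩ.le, mul_pos (mul_pos hu hsθ) hcΩ,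
      sq_nonneg ((v + u * cos θ) * sin Ω - u * sin θ * cos Ω),
      sq_nonneg ((v + u * cos θ) * sin Ω + u * sin θ * cos Ω)]
  · intro h
    have hBc : 0 < u * sin θ * cos Ω := by positivity
    have hAs : u * sin θ * cos Ω ≤ (v + u * cos θ) * sin Ω := by nlinarith
    have hA0 : 0 < v + u * cos θ := by nlinarith
    have hsq : (N * cos Ω) ^ 2 ≤ (v + u * cos θ) ^ 2 := by
      nlinarith [mul_nonneg hBc.le (le_trans hBc.le hAs), sq_nonneg ((v + u * cos θ) * sin Ω - u * sin θ * cos Ω)]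
    exact (pow_le_pow_iff_left₀ (mul_nonneg hN0 hcΩ.le) hA0.le two_ne_zero).mp hsq
end

section
/- Let Ω ∈ (0, π/2), u > 0, and θ ∈ (Ω, π − Ω). Define w(v) = (−v·sin θ, u + v·cos θ). Then for every v ∈ ℝ, the point w(v) lies in the ego beam cone — that is, ⟨w(v), (0,1)⟩ ≥ ‖w(v)‖·cos Ω — if and only if −u·sin Ω/sin(θ + Ω) ≤ v ≤ u·sin Ω/sin(θ − Ω). (The portion of a street crossing the ego street at angle θ ∈ (Ω, π−Ω) that lies inside the ego radar's infinite beam cone is a segment with these endpoints.) -/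
open Real
open scoped RealInnerProductSpace

lemma cone_aux (x y c s : ℝ) (hc : 0 < c) (hs : 0 < s) (hcs : c ^ 2 + s ^ 2 = 1) :
    y ≥ Real.sqrt (x ^ 2 + y ^ 2) * c ↔ y * s ≥ |x| * c := by
  have hnn : (0:ℝ) ≤ x ^ 2 + y ^ 2 := by positivity
  have hsq : Real.sqrt (x ^ 2 + y ^ 2) ^ 2 = x ^ 2 + y ^ 2 := Real.sq_sqrt hnn
  have hsqrt_nn : 0 ≤ Real.sqrt (x ^ 2 + y ^ 2) := Real.sqrt_nonneg _
  have habs : |x| ^ 2 = x ^ 2 := sq_abs x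
  have habs_nn : 0 ≤ |x| := abs_nonneg x
  constructor
  · intro h
    have hy : 0 ≤ y := le_trans (by positivity) h
    have h2 : (x ^ 2 + y ^ 2) * c ^ 2 ≤ y ^ 2 := by
      nlinarith [mul_le_mul h h (mul_nonneg hsqrt_nn hc.le) hy]
    nlinarith [mul_nonneg hy hs.le, mul_nonneg habs_nn hc.le]
  · intro h
    have hy : 0 ≤ y := by nlinarith [mul_nonneg habs_nn hc.le]
    have h2 : (x ^ 2 + y ^ 2) * c ^ 2 ≤ y ^ 2 := by
      nlinarith [mul_le_mul h h (mul_nonneg habs_nn hc.le) (mul_nonneg hy hs.le)]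
    nlinarith [mul_nonneg hsqrt_nn hc.le]

/-- The ego radar is at the origin with beam axis `(0,1)` and half-beamwidth `Ω`. A street
crosses the y-axis at `(0, u)` (`u > 0`) at angle `θ ∈ (Ω, π − Ω)`, parameterized by
`w(v) = (0,u) + v·(−sin θ, cos θ)`. Then `w(v)` lies in the ego beam cone, i.e.
`⟨w(v), (0,1)⟩ ≥ ‖w(v)‖·cos Ω`, iff `−u·sin Ω/sin(θ + Ω) ≤ v ≤ u·sin Ω/sin(θ − Ω)`. -/
theorem street_in_ego_cone_iff (Ω θ u : ℝ) (hΩ : Ω ∈ Set.Ioo 0 (π / 2))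
    (hu : 0 < u) (hθ : θ ∈ Set.Ioo Ω (π - Ω)) (v : ℝ) :
    ⟪vec2 (-(v * sin θ)) (u + v * cos θ), vec2 0 1⟫ ≥
        ‖vec2 (-(v * sin θ)) (u + v * cos θ)‖ * cos Ω ↔
      -(u * sin Ω / sin (θ + Ω)) ≤ v ∧ v ≤ u * sin Ω / sin (θ - Ω) := by
  obtain ⟨hΩ0, hΩ2⟩ := hΩ
  obtain ⟨hθ1, hθ2⟩ := hθ
  have hpi := pi_pos
  have hsΩ : 0 < sin Ω := sin_pos_of_pos_of_lt_pi hΩ0 (by linarith)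
  have hcΩ : 0 < cos Ω := cos_pos_of_mem_Ioo ⟨by linarith, hΩ2⟩
  have hsm : 0 < sin (θ - Ω) := sin_pos_of_pos_of_lt_pi (by linarith) (by linarith)
  have hsp : 0 < sin (θ + Ω) := sin_pos_of_pos_of_lt_pi (by linarith) (by linarith)
  set x := -(v * sin θ) with hx
  set y := u + v * cos θ with hy
  have hinner : ⟪vec2 x y, vec2 0 1⟫ = y := by
    simp [vec2, PiLp.inner_apply, Fin.sum_univ_two]
  have hnorm : ‖vec2 x y‖ = Real.sqrt (x ^ 2 + y ^ 2) := by
    rw [EuclideanSpace.norm_eq]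
    simp [vec2, Fin.sum_univ_two, sq_abs]
  rw [hinner, hnorm,
    cone_aux x y (cos Ω) (sin Ω) hcΩ hsΩ (cos_sq_add_sin_sq Ω)]
  have habs : y * sin Ω ≥ |x| * cos Ω ↔
      0 ≤ u * sin Ω + v * sin (θ + Ω) ∧ 0 ≤ u * sin Ω - v * sin (θ - Ω) := by
    rw [ge_iff_le, show |x| * cos Ω = |x * cos Ω| by
      rw [abs_mul, abs_of_pos hcΩ], abs_le, hx, hy, sin_add, sin_sub]
    constructor <;> rintro ⟨h1, h2⟩ <;> constructor <;> nlinarith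
  have e1 : -(u * sin Ω / sin (θ + Ω)) ≤ v ↔ 0 ≤ u * sin Ω + v * sin (θ + Ω) := by
    rw [neg_le, le_div_iff₀ hsp]
    constructor <;> intro <;> nlinarith
  have e2 : v ≤ u * sin Ω / sin (θ - Ω) ↔ 0 ≤ u * sin Ω - v * sin (θ - Ω) := by
    rw [le_div_iff₀ hsm]
    constructor <;> intro <;> nlinarith
  rw [habs, e1, e2]
end

section
/- Let Ω ∈ (0, π/2), R > 0, 0 ≤ u ≤ R, and θ ∈ (0, π/2] with sin θ·|R·cos Ω − u| ≤ R·sin Ω·cos θ (equivalently, 0 < θ ≤ αₙ where αₙ = arctan(R·sin Ω/|R·cos Ω − u|)). Then the one-dimensional Hausdorff measure of L(θ,u) ∩ S(Ω,R) equals u·tan Ω/(sin θ + cos θ·tan Ω) + √(R² − u²·sin²θ) − u·cos θ. (Case 1 of Lemma 1: the line exits the sector through one straight edge and through the circular arc.) -/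
open Real MeasureTheory

/-- The radar sector with half-beamwidth `Ω` and maximum range `R`, apex at the origin and
axis the positive `y`-axis: `{(x,y) : y ≥ √(x² + y²)·cos Ω and x² + y² ≤ R²}`. -/
def radarSector (Ω R : ℝ) : Set (EuclideanSpace ℝ (Fin 2)) :=
  {p | p 1 ≥ Real.sqrt ((p 0) ^ 2 + (p 1) ^ 2) * Real.cos Ω ∧ (p 0) ^ 2 + (p 1) ^ 2 ≤ R ^ 2}

/-- The street line `L(θ,u) = {(0,u) + t·(−sin θ, cos θ) : t ∈ ℝ}` crossing the y-axis at
`(0,u)` at angle `θ`. -/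
noncomputable def streetLine (θ u : ℝ) : Set (EuclideanSpace ℝ (Fin 2)) :=
  {p | ∃ t : ℝ, p = vec2 (-(t * Real.sin θ)) (u + t * Real.cos θ)}

/-- Parametrization of the street line by arc length. -/
noncomputable def streetParam (θ u : ℝ) : ℝ → EuclideanSpace ℝ (Fin 2) :=
  fun t => vec2 (-(t * Real.sin θ)) (u + t * Real.cos θ)

lemma streetParam_isometry (θ u : ℝ) : Isometry (streetParam θ u) := by
  apply Isometry.of_dist_eq
  intro a b
  simp only [streetParam, vec2, EuclideanSpace.dist_eq, Fin.sum_univ_two, Matrix.cons_val_zero, PiLp.toLp_apply,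
    Matrix.cons_val_one, Matrix.head_cons, Real.dist_eq, Real.sqrt_sq_eq_abs, sq_abs]
  rw [← Real.sqrt_sq_eq_abs]
  congr 1
  linear_combination (a - b) ^ 2 * Real.sin_sq_add_cos_sq θ

lemma streetLine_eq_range (θ u : ℝ) : streetLine θ u = Set.range (streetParam θ u) := by
  ext p
  constructor
  · rintro ⟨t, ht⟩; exact ⟨t, ht.symm⟩
  · rintro ⟨t, ht⟩; exact ⟨t, ht.symm⟩

/-- The angular condition of the sector, reformulated without square roots. -/
lemma angular_char (Ω θ u t : ℝ) (hsθ : 0 < sin θ) (hsΩ : 0 < sin Ω) (hcΩ : 0 < cos Ω) :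
    (u + t * cos θ ≥ Real.sqrt (t ^ 2 + 2 * u * t * cos θ + u ^ 2) * cos Ω) ↔
      |t| * sin θ * cos Ω ≤ (u + t * cos θ) * sin Ω := by
  set a : ℝ := |t| * sin θ with ha_def
  set p : ℝ := u + t * cos θ with hp_def
  have ha0 : 0 ≤ a := mul_nonneg (abs_nonneg t) hsθ.le
  have hq : t ^ 2 + 2 * u * t * cos θ + u ^ 2 = a ^ 2 + p ^ 2 := by
    rw [ha_def, hp_def, mul_pow, sq_abs]
    linear_combination (-(t ^ 2)) * sin_sq_add_cos_sq θ
  have hpyΩ := sin_sq_add_cos_sq Ω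
  rw [hq]
  constructor
  · intro h
    have hp0 : 0 ≤ p := le_trans (by positivity) h
    have hsq : (a ^ 2 + p ^ 2) * cos Ω ^ 2 ≤ p ^ 2 := by
      have h2 : (Real.sqrt (a ^ 2 + p ^ 2) * cos Ω) ^ 2 ≤ p ^ 2 :=
        pow_le_pow_left₀ (by positivity) h 2
      rwa [mul_pow, Real.sq_sqrt (by positivity : (0:ℝ) ≤ a ^ 2 + p ^ 2)] at h2
    nlinarith [mul_nonneg ha0 hcΩ.le, mul_nonneg hp0 hsΩ.le]
  · intro h
    have hp0 : 0 ≤ p := by nlinarith [mul_nonneg ha0 hcΩ.le]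
    have hsq : (a ^ 2 + p ^ 2) * cos Ω ^ 2 ≤ p ^ 2 := by
      nlinarith [mul_nonneg ha0 hcΩ.le, mul_nonneg hp0 hsΩ.le]
    calc Real.sqrt (a ^ 2 + p ^ 2) * cos Ω
        = Real.sqrt ((a ^ 2 + p ^ 2) * cos Ω ^ 2) := by
          rw [Real.sqrt_mul (by positivity), Real.sqrt_sq hcΩ.le]
      _ ≤ Real.sqrt (p ^ 2) := Real.sqrt_le_sqrt hsq
      _ = p := Real.sqrt_sq hp0

set_option maxHeartbeats 1000000 in
/-- Case 1 of Lemma 1: for `0 ≤ u ≤ R` and `0 < θ ≤ αₙ` (i.e.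
`sin θ·|R·cos Ω − u| ≤ R·sin Ω·cos θ`), the line exits the sector through one straight edge
and through the circular arc, and the length (one-dimensional Hausdorff measure) of
`L(θ,u) ∩ S(Ω,R)` is `u·tan Ω/(sin θ + cos θ·tan Ω) + √(R² − u²·sin²θ) − u·cos θ`. -/
theorem length_in_sector_case1 (Ω R u θ : ℝ) (hΩ : Ω ∈ Set.Ioo 0 (π / 2)) (hR : 0 < R)
    (hu0 : 0 ≤ u) (huR : u ≤ R) (hθ : θ ∈ Set.Ioc 0 (π / 2))
    (hcase : sin θ * |R * cos Ω - u| ≤ R * sin Ω * cos θ) :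
    μH[1] (streetLine θ u ∩ radarSector Ω R) =
      ENNReal.ofReal (u * tan Ω / (sin θ + cos θ * tan Ω) +
        Real.sqrt (R ^ 2 - u ^ 2 * sin θ ^ 2) - u * cos θ) := by
  obtain ⟨hΩ0, hΩ2⟩ := hΩ
  obtain ⟨hθ0, hθ2⟩ := hθ
  have hpi := Real.pi_pos
  have hsθ : 0 < sin θ := sin_pos_of_pos_of_lt_pi hθ0 (by linarith)
  have hcθ : 0 ≤ cos θ := cos_nonneg_of_mem_Icc ⟨by linarith, hθ2⟩
  have hsΩ : 0 < sin Ω := sin_pos_of_pos_of_lt_pi hΩ0 (by linarith)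
  have hcΩ : 0 < cos Ω := cos_pos_of_mem_Ioo ⟨by linarith, by linarith⟩
  have hS : 0 < sin (θ + Ω) := sin_pos_of_pos_of_lt_pi (by linarith) (by linarith)
  have hsadd : sin (θ + Ω) = sin θ * cos Ω + cos θ * sin Ω := sin_add θ Ω
  have hcadd : cos (θ + Ω) = cos θ * cos Ω - sin θ * sin Ω := cos_add θ Ω
  have hssub : sin (θ - Ω) = sin θ * cos Ω - cos θ * sin Ω := sin_sub θ Ω
  have hcsub : cos (θ - Ω) = cos θ * cos Ω + sin θ * sin Ω := cos_sub θ Ω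
  have hpyθ := sin_sq_add_cos_sq θ
  have hpyΩ := sin_sq_add_cos_sq Ω
  have hD0 : 0 ≤ R ^ 2 - u ^ 2 * sin θ ^ 2 := by nlinarith [sin_sq_le_one θ]
  set s : ℝ := Real.sqrt (R ^ 2 - u ^ 2 * sin θ ^ 2) with hs_def
  have hs0 : 0 ≤ s := Real.sqrt_nonneg _
  have hs2 : s ^ 2 = R ^ 2 - u ^ 2 * sin θ ^ 2 := Real.sq_sqrt hD0
  set t₁ : ℝ := -(u * sin Ω / sin (θ + Ω)) with ht1_def
  set t₂ : ℝ := s - u * cos θ with ht2_def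
  -- consequences of the case hypothesis
  have key1 : u * sin θ ≤ R * sin (θ + Ω) := by
    have h1 : sin θ * (u - R * cos Ω) ≤ sin θ * |R * cos Ω - u| := by
      rw [abs_sub_comm]
      exact mul_le_mul_of_nonneg_left (le_abs_self _) hsθ.le
    rw [hsadd]
    nlinarith [hcase, h1]
  have key2 : R * sin (θ - Ω) ≤ u * sin θ := by
    have h1 : sin θ * (R * cos Ω - u) ≤ sin θ * |R * cos Ω - u| :=
      mul_le_mul_of_nonneg_left (le_abs_self _) hsθ.le
    rw [hssub]
    nlinarith [hcase, h1]
  have hK : 0 ≤ s * sin (θ + Ω) + u * sin θ * cos (θ + Ω) := by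
    rcases le_or_gt 0 (cos (θ + Ω)) with h | h
    · positivity
    · have h1 : (u * sin θ * -cos (θ + Ω)) ^ 2 ≤ (s * sin (θ + Ω)) ^ 2 := by
        have hsq : u ^ 2 * sin θ ^ 2 ≤ R ^ 2 * sin (θ + Ω) ^ 2 := by
          nlinarith [mul_nonneg hu0 hsθ.le, mul_nonneg hR.le hS.le]
        nlinarith [sin_sq_add_cos_sq (θ + Ω)]
      nlinarith [mul_nonneg hs0 hS.le, mul_nonneg (mul_nonneg hu0 hsθ.le) (neg_nonneg.2 h.le)]
  have hK2 : s * sin (θ - Ω) ≤ u * sin θ * cos (θ - Ω) := by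
    have hcsub0 : 0 < cos (θ - Ω) := cos_pos_of_mem_Ioo ⟨by linarith, by linarith⟩
    rcases le_or_gt (sin (θ - Ω)) 0 with h | h
    · have h1 := mul_nonpos_of_nonneg_of_nonpos hs0 h
      have h2 : 0 ≤ u * sin θ * cos (θ - Ω) :=
        mul_nonneg (mul_nonneg hu0 hsθ.le) hcsub0.le
      linarith
    · have h1 : (s * sin (θ - Ω)) ^ 2 ≤ (u * sin θ * cos (θ - Ω)) ^ 2 := by
        have hsq : R ^ 2 * sin (θ - Ω) ^ 2 ≤ u ^ 2 * sin θ ^ 2 := by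
          nlinarith [mul_nonneg hu0 hsθ.le, mul_nonneg hR.le h.le]
        nlinarith [sin_sq_add_cos_sq (θ - Ω)]
      nlinarith [mul_nonneg hs0 h.le,
        mul_nonneg (mul_nonneg hu0 hsθ.le) hcsub0.le]
  -- the preimage of the sector under the line parametrization is `[t₁, t₂]`
  have hpre : streetParam θ u ⁻¹' radarSector Ω R = Set.Icc t₁ t₂ := by
    ext t
    simp only [Set.mem_preimage, radarSector, Set.mem_setOf_eq, Set.mem_Icc,
      streetParam, vec2, PiLp.toLp_apply, Matrix.cons_val_zero, Matrix.cons_val_one, Matrix.head_cons]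
    have hqeq : (-(t * sin θ)) ^ 2 + (u + t * cos θ) ^ 2
        = t ^ 2 + 2 * u * t * cos θ + u ^ 2 := by
      linear_combination t ^ 2 * hpyθ
    rw [hqeq, angular_char Ω θ u t hsθ hsΩ hcΩ]
    have hu2 : u ^ 2 * sin θ ^ 2 + u ^ 2 * cos θ ^ 2 = u ^ 2 := by
      linear_combination u ^ 2 * hpyθ
    constructor
    · rintro ⟨hA, hB⟩
      constructor
      · rcases le_or_gt 0 t with ht | ht
        · have h0 : t₁ ≤ 0 := by
            rw [ht1_def]
            exact neg_nonpos.2 (div_nonneg (mul_nonneg hu0 hsΩ.le) hS.le)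
          linarith only [h0, ht]
        · rw [abs_of_neg ht] at hA
          rw [ht1_def, neg_le, le_div_iff₀ hS]
          rw [hsadd]
          nlinarith only [hA]
      · have h1 : (t + u * cos θ) ^ 2 ≤ s ^ 2 := by
          nlinarith only [hB, hs2, hu2]
        have h2 : t + u * cos θ ≤ s := by nlinarith only [h1, hs0]
        rw [ht2_def]
        linarith only [h2]
    · rintro ⟨ht1, ht2⟩
      rw [ht1_def] at ht1
      rw [ht2_def] at ht2
      have htS : -t * sin (θ + Ω) ≤ u * sin Ω :=
        (le_div_iff₀ hS).mp (neg_le.mp ht1)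
      constructor
      · rcases abs_cases t with ⟨habs, ht0⟩ | ⟨habs, ht0⟩
        · rw [habs]
          rcases le_or_gt (sin (θ - Ω)) 0 with h | h
          · have h1 : t * sin (θ - Ω) ≤ 0 := mul_nonpos_of_nonneg_of_nonpos ht0 h
            rw [hssub] at h1
            nlinarith only [h1, mul_nonneg hu0 hsΩ.le]
          · have h3 : t * sin (θ - Ω) ≤ (s - u * cos θ) * sin (θ - Ω) :=
              mul_le_mul_of_nonneg_right ht2 h.le
            have hid2u : u * sin Ω + u * (cos θ * sin (θ - Ω)) = u * (sin θ * cos (θ - Ω)) := by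
              rw [hssub, hcsub]; linear_combination (-(u * sin Ω)) * hpyθ
            have h4 : t * sin (θ - Ω) ≤ u * sin Ω := by
              nlinarith only [h3, hK2, hid2u]
            rw [hssub] at h4
            nlinarith only [h4]
        · rw [habs]
          rw [hsadd] at htS
          nlinarith only [htS]
      · have hid : (u * cos θ) * sin (θ + Ω) - u * sin Ω = u * sin θ * cos (θ + Ω) := by
          rw [hsadd, hcadd]; linear_combination (u * sin Ω) * hpyθ
        have h1 : 0 ≤ (t + u * cos θ + s) * sin (θ + Ω) := by
          nlinarith only [htS, hK, hid]
        have h2 : 0 ≤ t + u * cos θ + s := (mul_nonneg_iff_of_pos_right hS).mp h1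
        have h3 : 0 ≤ s - u * cos θ - t := by linarith only [ht2]
        nlinarith only [mul_nonneg h2 h3, hs2, hu2]
  have hset : streetLine θ u ∩ radarSector Ω R = streetParam θ u '' Set.Icc t₁ t₂ := by
    rw [streetLine_eq_range, Set.inter_comm, ← Set.image_preimage_eq_inter_range, hpre]
  rw [hset, (streetParam_isometry θ u).hausdorffMeasure_image (Or.inl one_pos.le),
    hausdorffMeasure_real, Real.volume_Icc]
  congr 1
  have halg : u * tan Ω / (sin θ + cos θ * tan Ω) = u * sin Ω / sin (θ + Ω) := by
    have hden : sin θ * cos Ω + cos θ * sin Ω ≠ 0 := by rw [← hsadd]; exact hS.ne'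
    rw [tan_eq_sin_div_cos, hsadd]
    field_simp
  rw [halg, ht2_def, ht1_def]
  ring
end

section
/- Let Ω ∈ (0, π/2), R > 0, 0 ≤ u ≤ R·cos Ω, and θ ∈ (0, π) with sin θ·(R·cos Ω − u) > R·sin Ω·|cos θ| (equivalently, αₙ < θ < π − αₙ where αₙ = arctan(R·sin Ω/(R·cos Ω − u))). Then the one-dimensional Hausdorff measure of L(θ,u) ∩ S(Ω,R) equals 2·u·sin θ·tan Ω/(sin²θ − cos²θ·tan²Ω). (Case 2 of Lemma 1: the line enters and exits the sector through the two straight edges.) -/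
open Real MeasureTheory

lemma le_of_sq_le_sq' {a b : ℝ} (h : a ^ 2 ≤ b ^ 2) (hb : 0 ≤ b) : a ≤ b := by
  nlinarith [sq_nonneg (a + b), sq_nonneg (a - b)]

lemma lineIso (θ u : ℝ) :
    Isometry (fun t : ℝ => vec2 (-(t * Real.sin θ)) (u + t * Real.cos θ)) := by
  apply Isometry.of_dist_eq
  intro a b
  rw [EuclideanSpace.dist_eq, Real.dist_eq, ← Real.sqrt_sq_eq_abs]
  congr 1
  simp only [vec2, WithLp.ofLp_toLp, Fin.sum_univ_two, Matrix.cons_val_zero, Matrix.cons_val_one, Matrix.head_cons,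
    Real.dist_eq, sq_abs]
  linear_combination (a - b) ^ 2 * (Real.sin_sq_add_cos_sq θ)

/-- membership criterion for the sector -/
lemma mem_radarSector_iff {Ω R x y : ℝ} (hΩ : Ω ∈ Set.Ioo 0 (π / 2)) :
    vec2 x y ∈ radarSector Ω R ↔ |x| * Real.cos Ω ≤ y * Real.sin Ω ∧ x ^ 2 + y ^ 2 ≤ R ^ 2 := by
  have hc : 0 < Real.cos Ω := Real.cos_pos_of_mem_Ioo ⟨by linarith [hΩ.1, Real.pi_pos], hΩ.2⟩
  have hs : 0 < Real.sin Ω := Real.sin_pos_of_pos_of_lt_pi hΩ.1 (by linarith [Real.pi_pos, hΩ.2])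
  have hx0 : (vec2 x y) 0 = x := rfl
  have hy0 : (vec2 x y) 1 = y := rfl
  simp only [radarSector, Set.mem_setOf_eq, hx0, hy0]
  constructor
  · rintro ⟨h1, h2⟩
    refine ⟨?_, h2⟩
    have hy : 0 ≤ y := le_trans (by positivity) h1
    have hsq : (Real.sqrt (x ^ 2 + y ^ 2) * Real.cos Ω) ^ 2 ≤ y ^ 2 := by
      apply sq_le_sq' _ h1
      nlinarith [Real.sqrt_nonneg (x ^ 2 + y ^ 2)]
    rw [mul_pow, Real.sq_sqrt (by positivity)] at hsq
    have h3 : (|x| * Real.cos Ω) ^ 2 ≤ (y * Real.sin Ω) ^ 2 := by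
      have := Real.sin_sq_add_cos_sq Ω
      rw [mul_pow, mul_pow, sq_abs]
      nlinarith
    exact le_of_sq_le_sq' h3 (by positivity)
  · rintro ⟨h1, h2⟩
    refine ⟨?_, h2⟩
    have hy : 0 ≤ y := by nlinarith [abs_nonneg x]
    have hsum : (x ^ 2 + y ^ 2) * Real.cos Ω ^ 2 ≤ y ^ 2 := by
      have h3 : (|x| * Real.cos Ω) ^ 2 ≤ (y * Real.sin Ω) ^ 2 := by
        apply sq_le_sq' _ h1
        nlinarith [abs_nonneg x]
      have := Real.sin_sq_add_cos_sq Ω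
      rw [mul_pow, mul_pow, sq_abs] at h3
      nlinarith
    calc Real.sqrt (x ^ 2 + y ^ 2) * Real.cos Ω
        = Real.sqrt ((x ^ 2 + y ^ 2) * Real.cos Ω ^ 2) := by
          rw [Real.sqrt_mul (by positivity), Real.sqrt_sq hc.le]
      _ ≤ Real.sqrt (y ^ 2) := Real.sqrt_le_sqrt hsum
      _ = y := Real.sqrt_sq hy

set_option maxHeartbeats 2000000 in
/-- Case 2 of Lemma 1: for `0 ≤ u ≤ R·cos Ω` and `αₙ < θ < π − αₙ` (i.e.
`sin θ·(R·cos Ω − u) > R·sin Ω·|cos θ|`), the line enters and exits the sector through the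
two straight edges, and the length of `L(θ,u) ∩ S(Ω,R)` is
`2·u·sin θ·tan Ω/(sin²θ − cos²θ·tan²Ω)`. -/
theorem length_in_sector_case2 (Ω R u θ : ℝ) (hΩ : Ω ∈ Set.Ioo 0 (π / 2)) (hR : 0 < R)
    (hu0 : 0 ≤ u) (huR : u ≤ R * cos Ω) (hθ : θ ∈ Set.Ioo 0 π)
    (hcase : sin θ * (R * cos Ω - u) > R * sin Ω * |cos θ|) :
    μH[1] (streetLine θ u ∩ radarSector Ω R) =
      ENNReal.ofReal (2 * u * sin θ * tan Ω / (sin θ ^ 2 - cos θ ^ 2 * tan Ω ^ 2)) := by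
  have hcΩ : 0 < Real.cos Ω := Real.cos_pos_of_mem_Ioo ⟨by linarith [hΩ.1, Real.pi_pos], hΩ.2⟩
  have hsΩ : 0 < Real.sin Ω := Real.sin_pos_of_pos_of_lt_pi hΩ.1 (by linarith [Real.pi_pos, hΩ.2])
  have hsθ : 0 < Real.sin θ := Real.sin_pos_of_pos_of_lt_pi hθ.1 hθ.2
  have habs : 0 ≤ |Real.cos θ| := abs_nonneg _
  have hedge : Real.sin Ω * |Real.cos θ| < Real.sin θ * Real.cos Ω := by nlinarith
  have hA : 0 < Real.sin θ * Real.cos Ω - Real.cos θ * Real.sin Ω := by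
    have hle : Real.cos θ ≤ |Real.cos θ| := le_abs_self _
    nlinarith
  have hB : 0 < Real.sin θ * Real.cos Ω + Real.cos θ * Real.sin Ω := by
    have hle : -Real.cos θ ≤ |Real.cos θ| := neg_le_abs _
    nlinarith
  set A := Real.sin θ * Real.cos Ω - Real.cos θ * Real.sin Ω with hAdef
  set B := Real.sin θ * Real.cos Ω + Real.cos θ * Real.sin Ω with hBdef
  set t₁ : ℝ := -(u * Real.sin Ω / B) with ht1
  set t₂ : ℝ := u * Real.sin Ω / A with ht2
  have ht1le : t₁ ≤ 0 := by rw [ht1, neg_nonpos]; positivity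
  have ht2ge : 0 ≤ t₂ := by rw [ht2]; positivity
  have hRsΩ : (0:ℝ) ≤ R * Real.sin Ω := by positivity
  have haux1 : R * Real.sin Ω * Real.cos θ ≤ R * Real.sin Ω * |Real.cos θ| :=
    mul_le_mul_of_nonneg_left (le_abs_self _) hRsΩ
  have haux2 : R * Real.sin Ω * (-Real.cos θ) ≤ R * Real.sin Ω * |Real.cos θ| :=
    mul_le_mul_of_nonneg_left (neg_le_abs _) hRsΩ
  have hcasep : R * Real.sin Ω * Real.cos θ < Real.sin θ * (R * Real.cos Ω - u) := by linarith
  have hcasen : -(R * Real.sin Ω * Real.cos θ) < Real.sin θ * (R * Real.cos Ω - u) := by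
    nlinarith [haux2, hcase]
  have hy2 : u + t₂ * Real.cos θ ≤ R * Real.cos Ω := by
    rw [ht2, div_mul_eq_mul_div, ← sub_nonneg]
    have heq : R * Real.cos Ω - (u + u * Real.sin Ω * Real.cos θ / A) =
        (R * Real.cos Ω * A - u * A - u * Real.sin Ω * Real.cos θ) / A := by
      field_simp
      ring
    rw [heq]
    apply div_nonneg _ hA.le
    rw [hAdef]
    nlinarith [mul_pos hcΩ (sub_pos.mpr hcasep)]
  have hy1 : u + t₁ * Real.cos θ ≤ R * Real.cos Ω := by
    rw [ht1, neg_mul, div_mul_eq_mul_div, ← sub_nonneg]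
    have heq : R * Real.cos Ω - (u + -(u * Real.sin Ω * Real.cos θ / B)) =
        (R * Real.cos Ω * B - u * B + u * Real.sin Ω * Real.cos θ) / B := by
      field_simp
      ring
    rw [heq]
    apply div_nonneg _ hB.le
    rw [hBdef]
    nlinarith [mul_pos hcΩ (sub_pos.mpr hcasen)]
  -- the set equality
  have hset : streetLine θ u ∩ radarSector Ω R =
      (fun t : ℝ => vec2 (-(t * Real.sin θ)) (u + t * Real.cos θ)) '' Set.Icc t₁ t₂ := by
    ext p
    constructor
    · rintro ⟨⟨t, rfl⟩, hmem⟩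
      refine ⟨t, ?_, rfl⟩
      rw [mem_radarSector_iff hΩ] at hmem
      obtain ⟨h1, _⟩ := hmem
      rw [abs_neg, abs_mul, abs_of_nonneg hsθ.le] at h1
      rcases le_or_gt 0 t with ht | ht
      · refine ⟨le_trans ht1le ht, ?_⟩
        rw [abs_of_nonneg ht] at h1
        rw [ht2, le_div_iff₀ hA, hAdef]
        nlinarith
      · refine ⟨?_, le_trans ht.le ht2ge⟩
        rw [abs_of_neg ht] at h1
        have h2 : -t ≤ u * Real.sin Ω / B := by
          rw [le_div_iff₀ hB, hBdef]
          nlinarith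
        rw [ht1]
        linarith
    · rintro ⟨t, ⟨htl, htr⟩, rfl⟩
      refine ⟨⟨t, rfl⟩, ?_⟩
      rw [mem_radarSector_iff hΩ]
      have hedge' : |(-(t * Real.sin θ))| * Real.cos Ω ≤ (u + t * Real.cos θ) * Real.sin Ω := by
        rw [abs_neg, abs_mul, abs_of_nonneg hsθ.le]
        rcases le_or_gt 0 t with ht | ht
        · rw [abs_of_nonneg ht]
          rw [ht2, le_div_iff₀ hA, hAdef] at htr
          nlinarith
        · rw [abs_of_neg ht]
          rw [ht1] at htl
          have h2 : (-t) * B ≤ u * Real.sin Ω := by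
            rw [← le_div_iff₀ hB]
            linarith
          rw [hBdef] at h2
          nlinarith
      refine ⟨hedge', ?_⟩
      have hxnn : 0 ≤ |(-(t * Real.sin θ))| * Real.cos Ω := by positivity
      have hy : u + t * Real.cos θ ≤ R * Real.cos Ω := by
        rcases le_or_gt 0 (Real.cos θ) with hc | hc
        · nlinarith
        · nlinarith
      have hy0' : 0 ≤ u + t * Real.cos θ := by nlinarith
      have hxsq : (t * Real.sin θ) ^ 2 * Real.cos Ω ^ 2 ≤
          (u + t * Real.cos θ) ^ 2 * Real.sin Ω ^ 2 := by
        have h4 := sq_le_sq' (by linarith) hedge'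
        rw [mul_pow, mul_pow, sq_abs, neg_pow] at h4
        nlinarith [h4]
      have hpyth := Real.sin_sq_add_cos_sq Ω
      have hysq : (u + t * Real.cos θ) ^ 2 ≤ (R * Real.cos Ω) ^ 2 := by nlinarith
      nlinarith [mul_pos hcΩ hcΩ, hxsq, hysq, hpyth]
  rw [hset, (lineIso θ u).hausdorffMeasure_image (Or.inl one_pos.le),
    MeasureTheory.hausdorffMeasure_real, Real.volume_Icc]
  congr 1
  have hD : Real.sin θ ^ 2 - Real.cos θ ^ 2 * Real.tan Ω ^ 2 = A * B / Real.cos Ω ^ 2 := by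
    rw [Real.tan_eq_sin_div_cos, hAdef, hBdef]
    field_simp
    ring
  rw [hD, ht2, ht1, Real.tan_eq_sin_div_cos]
  rw [sub_neg_eq_add]
  field_simp
  ring
end

section
/- Let Ω ∈ (0, π/2), R > 0, 0 ≤ u ≤ R, and θ ∈ [π/2, π] with sin θ·|R·cos Ω − u| ≤ −R·sin Ω·cos θ (equivalently, π − αₙ ≤ θ ≤ π where αₙ = arctan(R·sin Ω/|R·cos Ω − u|)). Then the one-dimensional Hausdorff measure of L(θ,u) ∩ S(Ω,R) equals u·tan Ω/(sin θ − cos θ·tan Ω) + √(R² − u²·sin²θ) + u·cos θ. (Case 3 of Lemma 1: the mirror case of Case 1, where the line exits through the other straight edge and the circular arc.) -/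
open Real MeasureTheory

private lemma sq_le_aux {x y : ℝ} (h : x ^ 2 ≤ y ^ 2) (hy : 0 ≤ y) : x ≤ y := by
  nlinarith [sq_nonneg (x - y), sq_nonneg (x + y)]

/-- claim 1 : `b + u·cos θ ≤ s` where `b = u sin Ω / D`. -/
private lemma aux_claim1 {q c v w u R s : ℝ} (hpθ : q ^ 2 + c ^ 2 = 1)
    (hpΩ : v ^ 2 + w ^ 2 = 1) (hu0 : 0 ≤ u) (hq : 0 ≤ q) (hs0 : 0 ≤ s)
    (hssq : s ^ 2 = R ^ 2 - u ^ 2 * q ^ 2) (hD : 0 < q * w - c * v)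
    (h2 : u * q ≤ R * (q * w - c * v)) :
    u * v / (q * w - c * v) + u * c ≤ s := by
  have hbD : u * v / (q * w - c * v) * (q * w - c * v) = u * v :=
    div_mul_cancel₀ _ hD.ne'
  have key1 : (u * v / (q * w - c * v) + u * c) * (q * w - c * v)
      = u * q * (q * v + c * w) := by linear_combination hbD - u * v * hpθ
  have h2sq : (u * q) ^ 2 ≤ (R * (q * w - c * v)) ^ 2 :=
    pow_le_pow_left₀ (mul_nonneg hu0 hq) h2 2
  have hFS : (q * v + c * w) ^ 2 + (q * w - c * v) ^ 2 = 1 := by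
    linear_combination (v ^ 2 + w ^ 2) * hpθ + hpΩ
  have e1 : (u * q * (q * v + c * w)) ^ 2
      = (u * q) ^ 2 * (1 - (q * w - c * v) ^ 2) := by
    linear_combination (u * q) ^ 2 * hFS
  have e2 : (s * (q * w - c * v)) ^ 2
      = (R ^ 2 - (u * q) ^ 2) * (q * w - c * v) ^ 2 := by
    linear_combination (q * w - c * v) ^ 2 * hssq
  have hsq : (u * q * (q * v + c * w)) ^ 2 ≤ (s * (q * w - c * v)) ^ 2 := by
    linarith [e1, e2, h2sq]
  have hle := sq_le_aux hsq (mul_nonneg hs0 hD.le)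
  rw [← key1] at hle
  exact le_of_mul_le_mul_right hle hD

/-- claim 2 : the second-edge linear form is nonnegative at `t = a = -(u c) - s`. -/
private lemma aux_claim2 {q c v w u R s : ℝ} (hpθ : q ^ 2 + c ^ 2 = 1)
    (hpΩ : v ^ 2 + w ^ 2 = 1) (hu0 : 0 ≤ u) (hq : 0 ≤ q) (hc : c ≤ 0)
    (hv : 0 < v) (hw : 0 < w) (hR : 0 < R) (hs0 : 0 ≤ s)
    (hssq : s ^ 2 = R ^ 2 - u ^ 2 * q ^ 2)
    (h1 : R * (q * w + c * v) ≤ u * q) :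
    0 ≤ u * v + (-(u * c) - s) * (q * w + c * v) := by
  have hC : 0 ≤ q * v - c * w := by
    have h3 : c * w ≤ 0 := mul_nonpos_of_nonpos_of_nonneg hc hw.le
    have h4 : 0 ≤ q * v := mul_nonneg hq hv.le
    linarith
  have keyA : u * v + (-(u * c) - s) * (q * w + c * v)
      = u * q * (q * v - c * w) - s * (q * w + c * v) := by
    linear_combination (-(u * v)) * hpθ
  rw [keyA]
  rcases le_or_gt (q * w + c * v) 0 with hE | hE
  · have h5 : 0 ≤ u * q * (q * v - c * w) := mul_nonneg (mul_nonneg hu0 hq) hC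
    have h6 : s * (q * w + c * v) ≤ 0 := mul_nonpos_of_nonneg_of_nonpos hs0 hE
    linarith
  · have hRE : (R * (q * w + c * v)) ^ 2 ≤ (u * q) ^ 2 :=
      pow_le_pow_left₀ (mul_pos hR hE).le h1 2
    have hCE : (q * v - c * w) ^ 2 + (q * w + c * v) ^ 2 = 1 := by
      linear_combination (v ^ 2 + w ^ 2) * hpθ + hpΩ
    have e3 : (u * q * (q * v - c * w)) ^ 2
        = (u * q) ^ 2 * (1 - (q * w + c * v) ^ 2) := by
      linear_combination (u * q) ^ 2 * hCE
    have e4 : (s * (q * w + c * v)) ^ 2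
        = (R ^ 2 - (u * q) ^ 2) * (q * w + c * v) ^ 2 := by
      linear_combination (q * w + c * v) ^ 2 * hssq
    have hsq : (s * (q * w + c * v)) ^ 2 ≤ (u * q * (q * v - c * w)) ^ 2 := by
      linarith [e3, e4, hRE]
    have := sq_le_aux hsq (mul_nonneg (mul_nonneg hu0 hq) hC)
    linarith

set_option maxHeartbeats 2000000 in
/-- Case 3 of Lemma 1: for `0 ≤ u ≤ R` and `π − αₙ ≤ θ ≤ π` (i.e.
`sin θ·|R·cos Ω − u| ≤ −R·sin Ω·cos θ`), the line exits the sector through the other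
straight edge and the circular arc, and the length of `L(θ,u) ∩ S(Ω,R)` is
`u·tan Ω/(sin θ − cos θ·tan Ω) + √(R² − u²·sin²θ) + u·cos θ`. -/
theorem length_in_sector_case3 (Ω R u θ : ℝ) (hΩ : Ω ∈ Set.Ioo 0 (π / 2)) (hR : 0 < R)
    (hu0 : 0 ≤ u) (huR : u ≤ R) (hθ : θ ∈ Set.Icc (π / 2) π)
    (hcase : sin θ * |R * cos Ω - u| ≤ -(R * sin Ω * cos θ)) :
    μH[1] (streetLine θ u ∩ radarSector Ω R) =
      ENNReal.ofReal (u * tan Ω / (sin θ - cos θ * tan Ω) +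
        Real.sqrt (R ^ 2 - u ^ 2 * sin θ ^ 2) + u * cos θ) := by
  obtain ⟨hΩ0, hΩ2⟩ := hΩ
  obtain ⟨hθ1, hθ2⟩ := hθ
  have hπ : (0:ℝ) < π := Real.pi_pos
  have hsΩ : 0 < sin Ω := Real.sin_pos_of_pos_of_lt_pi hΩ0 (by linarith)
  have hcΩ : 0 < cos Ω := Real.cos_pos_of_mem_Ioo ⟨by linarith, hΩ2⟩
  have hsθ : 0 ≤ sin θ := Real.sin_nonneg_of_nonneg_of_le_pi (by linarith) hθ2
  have hcθ : cos θ ≤ 0 := Real.cos_nonpos_of_pi_div_two_le_of_le hθ1 (by linarith)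
  have hpθ : sin θ ^ 2 + cos θ ^ 2 = 1 := Real.sin_sq_add_cos_sq θ
  have hpΩ : sin Ω ^ 2 + cos Ω ^ 2 = 1 := Real.sin_sq_add_cos_sq Ω
  set SΔ : ℝ := sin θ * cos Ω - cos θ * sin Ω with hSΔdef
  have hSΔ : 0 < SΔ := by
    have h : SΔ = sin (θ - Ω) := by rw [Real.sin_sub, hSΔdef]
    rw [h]
    exact Real.sin_pos_of_pos_of_lt_pi (by linarith) (by linarith)
  clear_value SΔ
  -- two branches of the case hypothesis
  have habs1 : R * (sin θ * cos Ω + cos θ * sin Ω) ≤ u * sin θ := by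
    have h := le_trans (mul_le_mul_of_nonneg_left (le_abs_self (R * cos Ω - u)) hsθ) hcase
    linarith [h]
  have habs2 : u * sin θ ≤ R * SΔ := by
    have h := le_trans (mul_le_mul_of_nonneg_left (neg_le_abs (R * cos Ω - u)) hsθ) hcase
    rw [hSΔdef]; linarith [h]
  -- the sqrt quantity
  have hRu : 0 ≤ R ^ 2 - u ^ 2 * sin θ ^ 2 := by
    have huu : u ^ 2 ≤ R ^ 2 := pow_le_pow_left₀ hu0 huR 2
    have e : u ^ 2 * sin θ ^ 2 = u ^ 2 - u ^ 2 * cos θ ^ 2 := by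
      linear_combination u ^ 2 * hpθ
    have h7 : 0 ≤ u ^ 2 * cos θ ^ 2 := mul_nonneg (sq_nonneg u) (sq_nonneg (cos θ))
    linarith
  set s : ℝ := Real.sqrt (R ^ 2 - u ^ 2 * sin θ ^ 2) with hsdef
  have hs0 : 0 ≤ s := Real.sqrt_nonneg _
  have hssq : s ^ 2 = R ^ 2 - u ^ 2 * sin θ ^ 2 := Real.sq_sqrt hRu
  clear_value s
  set a : ℝ := -(u * cos θ) - s with hadef
  set b : ℝ := u * sin Ω / SΔ with hbdef
  have hbSΔ : b * SΔ = u * sin Ω := by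
    rw [hbdef]; exact div_mul_cancel₀ _ hSΔ.ne'
  clear_value a b
  have claim1 : b + u * cos θ ≤ s := by
    rw [hbdef, hSΔdef]
    exact aux_claim1 hpθ hpΩ hu0 hsθ hs0 hssq (hSΔdef ▸ hSΔ) (hSΔdef ▸ habs2)
  have claim2 : 0 ≤ u * sin Ω + a * (sin θ * cos Ω + cos θ * sin Ω) := by
    rw [hadef]
    exact aux_claim2 hpθ hpΩ hu0 hsθ hcθ hsΩ hcΩ hR hs0 hssq habs1
  have hbE : 0 ≤ u * sin Ω + b * (sin θ * cos Ω + cos θ * sin Ω) := by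
    have h : (u * sin Ω + b * (sin θ * cos Ω + cos θ * sin Ω)) * SΔ
        = u * sin Ω * (2 * sin θ * cos Ω) := by
      linear_combination (sin θ * cos Ω + cos θ * sin Ω) * hbSΔ + u * sin Ω * hSΔdef
    have hnn : (0:ℝ) ≤ u * sin Ω * (2 * sin θ * cos Ω) :=
      mul_nonneg (mul_nonneg hu0 hsΩ.le)
        (mul_nonneg (mul_nonneg (by norm_num) hsθ) hcΩ.le)
    have h2 : (0:ℝ) * SΔ ≤ (u * sin Ω + b * (sin θ * cos Ω + cos θ * sin Ω)) * SΔ := by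
      rw [h, zero_mul]; exact hnn
    have := le_of_mul_le_mul_right h2 hSΔ
    linarith
  -- coordinate lemmas
  have hv0 : ∀ x y : ℝ, (vec2 x y) 0 = x := fun _ _ => rfl
  have hv1 : ∀ x y : ℝ, (vec2 x y) 1 = y := fun _ _ => rfl
  -- the circle identity
  have hF1 : ∀ t : ℝ, (-(t * sin θ)) ^ 2 + (u + t * cos θ) ^ 2 - R ^ 2
      = (t + u * cos θ) ^ 2 - s ^ 2 := by
    intro t
    linear_combination (t ^ 2 - u ^ 2) * hpθ + hssq
  -- set equality
  have hset : streetLine θ u ∩ radarSector Ω R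
      = (fun t : ℝ => vec2 (-(t * sin θ)) (u + t * cos θ)) '' Set.Icc a b := by
    ext p
    constructor
    · rintro ⟨⟨t, rfl⟩, hang, hcirc⟩
      simp only [hv0, hv1] at hang hcirc
      refine ⟨t, ⟨?_, ?_⟩, rfl⟩
      · -- a ≤ t, from the circle condition
        have hAq : (t + u * cos θ) ^ 2 ≤ s ^ 2 := by
          have := hF1 t; linarith
        have h6 : (-(t + u * cos θ)) ^ 2 ≤ s ^ 2 := by rw [neg_sq]; exact hAq
        have := sq_le_aux h6 hs0
        rw [hadef]; linarith
      · -- t ≤ b, from the angular condition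
        have hy0 : 0 ≤ u + t * cos θ :=
          le_trans (mul_nonneg (Real.sqrt_nonneg _) hcΩ.le) hang
        have h2 := pow_le_pow_left₀ (mul_nonneg (Real.sqrt_nonneg _) hcΩ.le) hang 2
        rw [mul_pow, Real.sq_sqrt (by positivity)] at h2
        have e5 : (u + t * cos θ) ^ 2 * sin Ω ^ 2
            = (u + t * cos θ) ^ 2 - (u + t * cos θ) ^ 2 * cos Ω ^ 2 := by
          linear_combination (u + t * cos θ) ^ 2 * hpΩ
        have hxw : ((-(t * sin θ)) * cos Ω) ^ 2 ≤ ((u + t * cos θ) * sin Ω) ^ 2 := by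
          linarith [h2, e5]
        have h7 : (-((-(t * sin θ)) * cos Ω)) ^ 2 ≤ ((u + t * cos θ) * sin Ω) ^ 2 := by
          rw [neg_sq]; exact hxw
        have h8 := sq_le_aux h7 (mul_nonneg hy0 hsΩ.le)
        have h9 : t * SΔ ≤ u * sin Ω := by rw [hSΔdef]; linarith [h8]
        rw [hbdef]
        exact (le_div_iff₀ hSΔ).mpr h9
    · rintro ⟨t, ⟨hta, htb⟩, rfl⟩
      have l1 : 0 ≤ u * sin Ω - t * SΔ := by
        have := mul_le_mul_of_nonneg_right htb hSΔ.le
        linarith [hbSΔ]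
      have l2 : 0 ≤ u * sin Ω + t * (sin θ * cos Ω + cos θ * sin Ω) := by
        rcases le_or_gt 0 (sin θ * cos Ω + cos θ * sin Ω) with hE | hE
        · have := mul_le_mul_of_nonneg_right hta hE
          linarith [claim2]
        · have := mul_le_mul_of_nonpos_right htb hE.le
          linarith [hbE]
      have l1' : 0 ≤ u * sin Ω - t * (sin θ * cos Ω - cos θ * sin Ω) := by
        rw [← hSΔdef]; exact l1
      refine ⟨⟨t, rfl⟩, ?_, ?_⟩
      · -- angular condition
        simp only [hv0, hv1]
        have hyv : 0 ≤ (u + t * cos θ) * sin Ω := by linarith [l1', l2]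
        have hy0 : 0 ≤ u + t * cos θ := by
          have h0 : (0:ℝ) * sin Ω ≤ (u + t * cos θ) * sin Ω := by
            rw [zero_mul]; exact hyv
          exact le_of_mul_le_mul_right h0 hsΩ
        have hxw2 : ((-(t * sin θ)) * cos Ω) ^ 2 ≤ ((u + t * cos θ) * sin Ω) ^ 2 := by
          have ha1 : -((u + t * cos θ) * sin Ω) ≤ (-(t * sin θ)) * cos Ω := by
            linarith [l1']
          have ha2 : (-(t * sin θ)) * cos Ω ≤ (u + t * cos θ) * sin Ω := by
            linarith [l2]
          exact sq_le_sq' ha1 ha2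
        have e5 : (u + t * cos θ) ^ 2 * sin Ω ^ 2
            = (u + t * cos θ) ^ 2 - (u + t * cos θ) ^ 2 * cos Ω ^ 2 := by
          linear_combination (u + t * cos θ) ^ 2 * hpΩ
        have key : ((-(t * sin θ)) ^ 2 + (u + t * cos θ) ^ 2) * cos Ω ^ 2
            ≤ (u + t * cos θ) ^ 2 := by linarith [hxw2, e5]
        calc Real.sqrt ((-(t * sin θ)) ^ 2 + (u + t * cos θ) ^ 2) * cos Ω
            = Real.sqrt (((-(t * sin θ)) ^ 2 + (u + t * cos θ) ^ 2) * cos Ω ^ 2) := by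
              rw [Real.sqrt_mul (by positivity), Real.sqrt_sq hcΩ.le]
          _ ≤ Real.sqrt ((u + t * cos θ) ^ 2) := Real.sqrt_le_sqrt key
          _ = u + t * cos θ := Real.sqrt_sq hy0
      · -- circle condition
        simp only [hv0, hv1]
        have h1 : (t + u * cos θ) ^ 2 ≤ s ^ 2 := by
          have hl : -s ≤ t + u * cos θ := by rw [hadef] at hta; linarith
          have hr : t + u * cos θ ≤ s := by linarith [claim1]
          exact sq_le_sq' (by linarith) hr
        have := hF1 t
        linarith
  -- the parametrization is an isometry
  have hiso : Isometry (fun t : ℝ => vec2 (-(t * sin θ)) (u + t * cos θ)) := by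
    apply Isometry.of_dist_eq
    intro x y
    rw [EuclideanSpace.dist_eq, Real.dist_eq, Fin.sum_univ_two]
    have hd : ∀ x y : ℝ, dist x y ^ 2 = (x - y) ^ 2 := by
      intro x y; rw [Real.dist_eq, sq_abs]
    rw [hv0, hv0, hv1, hv1, hd, hd, ← Real.sqrt_sq_eq_abs]
    congr 1
    linear_combination (x - y) ^ 2 * hpθ
  rw [hset, hiso.hausdorffMeasure_image (Or.inl zero_le_one),
    MeasureTheory.hausdorffMeasure_real, Real.volume_Icc]
  congr 1
  have hden : sin θ - cos θ * tan Ω = SΔ / cos Ω := by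
    rw [Real.tan_eq_sin_div_cos, hSΔdef]
    field_simp
  have htan : u * tan Ω / (sin θ - cos θ * tan Ω) = b := by
    rw [hden, hbdef, Real.tan_eq_sin_div_cos,
      div_eq_div_iff (div_ne_zero hSΔ.ne' hcΩ.ne') hSΔ.ne']
    ring
  rw [htan, hadef]
  ring
end

section
/- Let Ω ∈ (0, π/2), R > 0, R·cos Ω ≤ u ≤ R, and θ ∈ (0, π) with sin θ·(u − R·cos Ω) > R·sin Ω·|cos θ| (equivalently, αₙ < θ < π − αₙ where αₙ = arctan(R·sin Ω/(u − R·cos Ω))). Then the one-dimensional Hausdorff measure of L(θ,u) ∩ S(Ω,R) equals 2·√(R² − u²·sin²θ). (Case 4 of Lemma 1: the line enters and exits the sector through the circular arc only.) -/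
open Real MeasureTheory

private lemma vec2_line_isometry (u s c : ℝ) (h : s ^ 2 + c ^ 2 = 1) :
    Isometry (fun t : ℝ => vec2 (-(t * s)) (u + t * c)) := by
  apply Isometry.of_dist_eq
  intro p q
  have h0 : ∀ x y : ℝ, vec2 x y 0 = x := fun _ _ => rfl
  have h1 : ∀ x y : ℝ, vec2 x y 1 = y := fun _ _ => rfl
  rw [EuclideanSpace.dist_eq, Fin.sum_univ_two]
  simp only [h0, h1, Real.dist_eq, sq_abs]
  have he : (-(p * s) - -(q * s)) ^ 2 + (u + p * c - (u + q * c)) ^ 2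
      = (p - q) ^ 2 * (s ^ 2 + c ^ 2) := by ring
  rw [he, h, mul_one, Real.sqrt_sq_eq_abs]


set_option maxHeartbeats 2000000 in
/-- Case 4 of Lemma 1: for `R·cos Ω ≤ u ≤ R` and `αₙ < θ < π − αₙ` (i.e.
`sin θ·(u − R·cos Ω) > R·sin Ω·|cos θ|`), the line enters and exits the sector through the
circular arc only, and the length of `L(θ,u) ∩ S(Ω,R)` is `2·√(R² − u²·sin²θ)`. -/
theorem length_in_sector_case4 (Ω R u θ : ℝ) (hΩ : Ω ∈ Set.Ioo 0 (π / 2)) (hR : 0 < R)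
    (hu0 : R * cos Ω ≤ u) (huR : u ≤ R) (hθ : θ ∈ Set.Ioo 0 π)
    (hcase : sin θ * (u - R * cos Ω) > R * sin Ω * |cos θ|) :
    μH[1] (streetLine θ u ∩ radarSector Ω R) =
      ENNReal.ofReal (2 * Real.sqrt (R ^ 2 - u ^ 2 * sin θ ^ 2)) := by
  obtain ⟨hΩ0, hΩ2⟩ := hΩ
  obtain ⟨hθ0, hθπ⟩ := hθ
  have hs : 0 < sin θ := sin_pos_of_pos_of_lt_pi hθ0 hθπ
  have hm : 0 < sin Ω := sin_pos_of_pos_of_lt_pi hΩ0 (by linarith [pi_pos])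
  have hk : 0 < cos Ω := cos_pos_of_mem_Ioo ⟨by linarith [pi_pos], hΩ2⟩
  have hsc : sin θ ^ 2 + cos θ ^ 2 = 1 := sin_sq_add_cos_sq θ
  have hmk : sin Ω ^ 2 + cos Ω ^ 2 = 1 := sin_sq_add_cos_sq Ω
  obtain ⟨a, ha⟩ : ∃ a : ℝ, a = |cos θ| := ⟨_, rfl⟩
  rw [← ha] at hcase
  have ha0 : 0 ≤ a := ha ▸ abs_nonneg _
  have hsa : sin θ ^ 2 + a ^ 2 = 1 := by rw [ha, sq_abs]; exact hsc
  have hu : 0 < u := lt_of_lt_of_le (mul_pos hR hk) hu0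
  have hd2 : (0:ℝ) ≤ R ^ 2 - u ^ 2 * sin θ ^ 2 := by nlinarith
  obtain ⟨d, hd⟩ : ∃ d : ℝ, d = Real.sqrt (R ^ 2 - u ^ 2 * sin θ ^ 2) := ⟨_, rfl⟩
  rw [← hd]
  have hdsq : d ^ 2 = R ^ 2 - u ^ 2 * sin θ ^ 2 := hd ▸ Real.sq_sqrt hd2
  have hd0 : 0 ≤ d := hd ▸ Real.sqrt_nonneg _
  -- strict inequality u > R cos Ω
  have huRk : R * cos Ω < u := by
    by_contra h
    push_neg at h
    have h1 : sin θ * (u - R * cos Ω) ≤ 0 :=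
      mul_nonpos_of_nonneg_of_nonpos hs.le (by linarith)
    have h2 : 0 ≤ R * sin Ω * a := mul_nonneg (mul_nonneg hR.le hm.le) ha0
    linarith
  -- key inequality: u sin²θ − R cosΩ > a·d
  have hA : 0 < u * sin θ ^ 2 - R * cos Ω := by
    rcases eq_or_lt_of_le ha0 with hczero | hcpos
    · have ha2 : a ^ 2 = 0 := by rw [← hczero]; ring
      nlinarith
    · rcases le_or_gt (a * cos Ω) (sin θ * sin Ω) with hsub | hsub
      · nlinarith [mul_lt_mul_of_pos_left hcase hs,
          mul_le_mul_of_nonneg_left hsub (mul_nonneg hR.le ha0)]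
      · exfalso
        have e0 : R * (sin Ω * a) < R * (sin θ * (1 - cos Ω)) := by
          nlinarith [mul_nonneg hs.le (sub_nonneg.mpr huR)]
        have e1 : sin Ω * a < sin θ * (1 - cos Ω) := (mul_lt_mul_iff_right₀ hR).mp e0
        have hk1 : cos Ω < 1 := by nlinarith
        have hamk : a * sin Ω ^ 2 + a * cos Ω ^ 2 = a := by linear_combination a * hmk
        linarith [mul_lt_mul_of_pos_left e1 hm,
          mul_lt_mul_of_pos_right hsub (show (0:ℝ) < 1 - cos Ω by linarith),
          mul_pos hcpos (show (0:ℝ) < 1 - cos Ω by linarith), hamk]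
  have hfac : (R * sin Ω * a) ^ 2 < (sin θ * (u - R * cos Ω)) ^ 2 := by
    have hn : 0 ≤ R * sin Ω * a := mul_nonneg (mul_nonneg hR.le hm.le) ha0
    exact pow_lt_pow_left₀ hcase hn two_ne_zero
  have hid : (u * sin θ ^ 2 - R * cos Ω) ^ 2 - (a * d) ^ 2
      = (sin θ * (u - R * cos Ω)) ^ 2 - (R * sin Ω * a) ^ 2 := by
    linear_combination (-(a ^ 2)) * hdsq + (R ^ 2 * a ^ 2) * hmk
      - (R ^ 2 * cos Ω ^ 2 - u ^ 2 * sin θ ^ 2) * hsa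
  have hA2 : (a * d) ^ 2 < (u * sin θ ^ 2 - R * cos Ω) ^ 2 := by linarith
  have hkey : a * d < u * sin θ ^ 2 - R * cos Ω := lt_of_pow_lt_pow_left₀ 2 hA.le hA2
  -- the parametrization
  have h0 : ∀ x y : ℝ, vec2 x y 0 = x := fun _ _ => rfl
  have h1 : ∀ x y : ℝ, vec2 x y 1 = y := fun _ _ => rfl
  have hiso : Isometry (fun t : ℝ => vec2 (-(t * sin θ)) (u + t * cos θ)) :=
    vec2_line_isometry u (sin θ) (cos θ) hsc
  -- set equality
  have hexp : ∀ t : ℝ, (-(t * sin θ)) ^ 2 + (u + t * cos θ) ^ 2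
      = (t + u * cos θ) ^ 2 + u ^ 2 * sin θ ^ 2 := by
    intro t
    linear_combination (t ^ 2 - u ^ 2) * hsc
  have hset : streetLine θ u ∩ radarSector Ω R
      = (fun t : ℝ => vec2 (-(t * sin θ)) (u + t * cos θ)) '' Set.Icc (-(u * cos θ) - d) (-(u * cos θ) + d) := by
    ext p
    simp only [streetLine, radarSector, Set.mem_inter_iff, Set.mem_setOf_eq, Set.mem_image,
      Set.mem_Icc]
    constructor
    · rintro ⟨⟨t, rfl⟩, _, hdisk⟩
      simp only [h0, h1] at hdisk
      rw [hexp t] at hdisk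
      have hq : (t + u * cos θ) ^ 2 ≤ d ^ 2 := by linarith
      exact ⟨t, ⟨by nlinarith [sq_nonneg (t + u * cos θ + d)],
        by nlinarith [sq_nonneg (t + u * cos θ - d)]⟩, rfl⟩
    · rintro ⟨t, ⟨ht1, ht2⟩, rfl⟩
      have hz : (t + u * cos θ) ^ 2 ≤ d ^ 2 := by
        nlinarith [mul_nonneg (show (0:ℝ) ≤ -(u * cos θ) + d - t by linarith)
          (show (0:ℝ) ≤ t - (-(u * cos θ) - d) by linarith)]
      have hnorm : (-(t * sin θ)) ^ 2 + (u + t * cos θ) ^ 2 ≤ R ^ 2 := by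
        rw [hexp t]; linarith
      refine ⟨⟨t, rfl⟩, ?_, ?_⟩
      · show u + t * cos θ ≥ Real.sqrt (_ ^ 2 + _ ^ 2) * cos Ω
        simp only [h0, h1]
        have hsq : Real.sqrt ((-(t * sin θ)) ^ 2 + (u + t * cos θ) ^ 2) ≤ R := by
          rw [show R = Real.sqrt (R ^ 2) from (Real.sqrt_sq hR.le).symm]
          exact Real.sqrt_le_sqrt hnorm
        have habs : |t + u * cos θ| ≤ d := abs_le.mpr ⟨by linarith, by linarith⟩
        have h3 : -(d * a) ≤ (t + u * cos θ) * cos θ := by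
          have hn := neg_abs_le ((t + u * cos θ) * cos θ)
          rw [abs_mul] at hn
          have : |t + u * cos θ| * |cos θ| ≤ d * a := by
            rw [← ha]
            exact mul_le_mul_of_nonneg_right habs ha0
          linarith
        have hid2 : u + t * cos θ = u * sin θ ^ 2 + (t + u * cos θ) * cos θ := by
          linear_combination (-u) * hsc
        have h4 : R * cos Ω < u + t * cos θ := by rw [hid2]; linarith
        have h5 : Real.sqrt ((-(t * sin θ)) ^ 2 + (u + t * cos θ) ^ 2) * cos Ω ≤ R * cos Ω :=
          mul_le_mul_of_nonneg_right hsq hk.le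
        linarith
      · simp only [h0, h1]; exact hnorm
  rw [hset, hiso.hausdorffMeasure_image (Or.inl one_pos.le), hausdorffMeasure_real,
    Real.volume_Icc]
  congr 1
  ring
end
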